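/- arXiv:2506.22731 — 7 statements merged into one kernel-verified Lean document; each statement's English description precedes it below -/
import Mathlib

section
/- Let γ : ℝ → ℝ² be a smooth arclength-parametrized curve with unit normal n = (−γ₂', γ₁') and curvature k = γ''·n. If γ satisfies the forward self-similar profile equation (γ(s)·n(s))/4 = −k''(s) for all s ∈ ℝ, then (d²/ds²)( k(s)² + ‖γ(s)‖²/4 ) = 1/2 + 2·k'(s)² for all s ∈ ℝ. -/
open scoped ContDiff


/-- If a smooth arclength-parametrized planar curve satisfies the forward self-similar
profile equation `(γ ⬝ n)/4 = -k''`, then `(d²/ds²)(k² + ‖γ‖²/4) = 1/2 + 2 k'²`. -/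
theorem stmt_1 (γ₁ γ₂ : ℝ → ℝ) (hγ₁ : ContDiff ℝ (⊤ : ℕ∞) γ₁) (hγ₂ : ContDiff ℝ (⊤ : ℕ∞) γ₂)
    (harc : ∀ s : ℝ, (deriv γ₁ s) ^ 2 + (deriv γ₂ s) ^ 2 = 1)
    (n₁ n₂ k : ℝ → ℝ)
    (hn₁ : ∀ s, n₁ s = -deriv γ₂ s) (hn₂ : ∀ s, n₂ s = deriv γ₁ s)
    (hk : ∀ s, k s = deriv (deriv γ₁) s * n₁ s + deriv (deriv γ₂) s * n₂ s)
    (hprofile : ∀ s : ℝ, (γ₁ s * n₁ s + γ₂ s * n₂ s) / 4 = -deriv (deriv k) s) :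
    ∀ s : ℝ,
      deriv (deriv (fun t => k t ^ 2 + (γ₁ t ^ 2 + γ₂ t ^ 2) / 4)) s
        = 1 / 2 + 2 * (deriv k s) ^ 2 := by
  have hγ₁' : ContDiff ℝ ∞ γ₁ := hγ₁.of_le (by simp)
  have hγ₂' : ContDiff ℝ ∞ γ₂ := hγ₂.of_le (by simp)
  have hd1 : ContDiff ℝ ∞ (deriv γ₁) := (contDiff_infty_iff_deriv.mp hγ₁').2
  have hd2 : ContDiff ℝ ∞ (deriv γ₂) := (contDiff_infty_iff_deriv.mp hγ₂').2
  have hdd1 : ContDiff ℝ ∞ (deriv (deriv γ₁)) := (contDiff_infty_iff_deriv.mp hd1).2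
  have hdd2 : ContDiff ℝ ∞ (deriv (deriv γ₂)) := (contDiff_infty_iff_deriv.mp hd2).2
  have hkeq : k = fun s =>
      deriv (deriv γ₁) s * (-(deriv γ₂ s)) + deriv (deriv γ₂) s * (deriv γ₁ s) := by
    funext s; rw [hk s, hn₁ s, hn₂ s]
  have hks : ContDiff ℝ ∞ k := by
    rw [hkeq]; exact (hdd1.mul hd2.neg).add (hdd2.mul hd1)
  have hdk : ContDiff ℝ ∞ (deriv k) := (contDiff_infty_iff_deriv.mp hks).2
  have D : ∀ (f : ℝ → ℝ), ContDiff ℝ ∞ f → ∀ t : ℝ, HasDerivAt f (deriv f t) t :=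
    fun f hf t => (hf.differentiable (by simp) t).hasDerivAt
  -- derivative of the arclength constraint: γ'·γ'' = 0
  have B : ∀ s : ℝ, deriv γ₁ s * deriv (deriv γ₁) s + deriv γ₂ s * deriv (deriv γ₂) s = 0 := by
    intro s
    have h1 : HasDerivAt (fun t => (deriv γ₁ t) ^ 2 + (deriv γ₂ t) ^ 2)
        (2 * deriv γ₁ s ^ 1 * deriv (deriv γ₁) s + 2 * deriv γ₂ s ^ 1 * deriv (deriv γ₂) s) s :=
      ((D _ hd1 s).pow 2).add ((D _ hd2 s).pow 2)
    have h2 : (fun t => (deriv γ₁ t) ^ 2 + (deriv γ₂ t) ^ 2) = fun _ : ℝ => (1 : ℝ) := by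
      funext t; exact harc t
    have h3 := h1.deriv
    rw [h2, deriv_const] at h3
    nlinarith [h3]
  intro s
  -- first derivative of f
  have Hf : deriv (fun t => k t ^ 2 + (γ₁ t ^ 2 + γ₂ t ^ 2) / 4)
      = fun t => 2 * k t * deriv k t + (2 * γ₁ t * deriv γ₁ t + 2 * γ₂ t * deriv γ₂ t) / 4 := by
    funext t
    have h1 : HasDerivAt (fun t => k t ^ 2 + (γ₁ t ^ 2 + γ₂ t ^ 2) / 4)
        (2 * k t * deriv k t + (2 * γ₁ t * deriv γ₁ t + 2 * γ₂ t * deriv γ₂ t) / 4) t := by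
      have h := ((D k hks t).pow 2).add
        ((((D γ₁ hγ₁' t).pow 2).add ((D γ₂ hγ₂' t).pow 2)).div_const 4)
      exact h.congr_deriv (by ring)
    exact h1.deriv
  rw [Hf]
  -- second derivative
  have h2 : HasDerivAt
      (fun t => 2 * k t * deriv k t + (2 * γ₁ t * deriv γ₁ t + 2 * γ₂ t * deriv γ₂ t) / 4)
      (2 * (deriv k s * deriv k s + k s * deriv (deriv k) s)
        + (2 * (deriv γ₁ s * deriv γ₁ s + γ₁ s * deriv (deriv γ₁) s)
          + 2 * (deriv γ₂ s * deriv γ₂ s + γ₂ s * deriv (deriv γ₂) s)) / 4) s := by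
    have h := (((D k hks s).mul (D _ hdk s)).const_mul 2).add
      (((((D γ₁ hγ₁' s).mul (D _ hd1 s)).const_mul 2).add
        (((D γ₂ hγ₂' s).mul (D _ hd2 s)).const_mul 2)).div_const 4)
    exact h.congr_of_eventuallyEq (Filter.Eventually.of_forall fun t => by
      simp only [Pi.add_apply, Pi.mul_apply]; ring)
  rw [h2.deriv]
  -- key geometric identity: γ·γ'' = -4 k k''
  have h3 : k s = deriv (deriv γ₁) s * (-(deriv γ₂ s)) + deriv (deriv γ₂) s * deriv γ₁ s := by
    rw [hk s, hn₁ s, hn₂ s]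
  have h4 : (γ₁ s * (-(deriv γ₂ s)) + γ₂ s * deriv γ₁ s) / 4 = -deriv (deriv k) s := by
    rw [← hn₁ s, ← hn₂ s]; exact hprofile s
  have key : γ₁ s * deriv (deriv γ₁) s + γ₂ s * deriv (deriv γ₂) s
      = -4 * k s * deriv (deriv k) s := by
    have e2 : γ₁ s * deriv (deriv γ₁) s + γ₂ s * deriv (deriv γ₂) s
        = (γ₁ s * deriv γ₁ s + γ₂ s * deriv γ₂ s)
            * (deriv γ₁ s * deriv (deriv γ₁) s + deriv γ₂ s * deriv (deriv γ₂) s)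
          + (γ₁ s * (-(deriv γ₂ s)) + γ₂ s * deriv γ₁ s)
            * (deriv (deriv γ₁) s * (-(deriv γ₂ s)) + deriv (deriv γ₂) s * deriv γ₁ s) := by
      linear_combination (-(γ₁ s * deriv (deriv γ₁) s + γ₂ s * deriv (deriv γ₂) s)) * harc s
    rw [B s, mul_zero, zero_add, ← h3] at e2
    have e3 : γ₁ s * (-(deriv γ₂ s)) + γ₂ s * deriv γ₁ s = -4 * deriv (deriv k) s := by
      linarith [h4]
    rw [e3] at e2
    linarith [e2]
  linear_combination (1/2 : ℝ) * key + (1/2 : ℝ) * harc s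
end

section
/- Let γ : ℝ → ℝ² be a smooth arclength-parametrized curve with unit normal n = (−γ₂', γ₁') and curvature k = γ''·n. If γ satisfies the backward self-similar profile equation (γ(s)·n(s))/4 = +k''(s) for all s ∈ ℝ, then (d²/ds²)( k(s)² − ‖γ(s)‖²/4 ) = −1/2 + 2·k'(s)² for all s ∈ ℝ. -/
/-- If a smooth arclength-parametrized planar curve satisfies the backward self-similar
profile equation `(γ ⬝ n)/4 = +k''`, then `(d²/ds²)(k² - ‖γ‖²/4) = -1/2 + 2 k'²`. -/
theorem stmt_2 (γ₁ γ₂ : ℝ → ℝ) (hγ₁ : ContDiff ℝ (⊤ : ℕ∞) γ₁) (hγ₂ : ContDiff ℝ (⊤ : ℕ∞) γ₂)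
    (harc : ∀ s : ℝ, (deriv γ₁ s) ^ 2 + (deriv γ₂ s) ^ 2 = 1)
    (n₁ n₂ k : ℝ → ℝ)
    (hn₁ : ∀ s, n₁ s = -deriv γ₂ s) (hn₂ : ∀ s, n₂ s = deriv γ₁ s)
    (hk : ∀ s, k s = deriv (deriv γ₁) s * n₁ s + deriv (deriv γ₂) s * n₂ s)
    (hprofile : ∀ s : ℝ, (γ₁ s * n₁ s + γ₂ s * n₂ s) / 4 = deriv (deriv k) s) :
    ∀ s : ℝ,
      deriv (deriv (fun t => k t ^ 2 - (γ₁ t ^ 2 + γ₂ t ^ 2) / 4)) s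
        = -(1 / 2) + 2 * (deriv k s) ^ 2 := by
  -- smoothness of derivatives
  have hγ₁' : ContDiff ℝ ((⊤ : ℕ∞) : WithTop ℕ∞) (deriv γ₁) := (contDiff_infty_iff_deriv.mp (hγ₁.of_le (by simp))).2
  have hγ₂' : ContDiff ℝ ((⊤ : ℕ∞) : WithTop ℕ∞) (deriv γ₂) := (contDiff_infty_iff_deriv.mp (hγ₂.of_le (by simp))).2
  have hγ₁'' : ContDiff ℝ ((⊤ : ℕ∞) : WithTop ℕ∞) (deriv (deriv γ₁)) := (contDiff_infty_iff_deriv.mp hγ₁').2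
  have hγ₂'' : ContDiff ℝ ((⊤ : ℕ∞) : WithTop ℕ∞) (deriv (deriv γ₂)) := (contDiff_infty_iff_deriv.mp hγ₂').2
  have hkeq : k = fun s => deriv (deriv γ₁) s * (-(deriv γ₂ s)) + deriv (deriv γ₂) s * deriv γ₁ s :=
    funext fun s => by rw [hk, hn₁, hn₂]
  have hksm : ContDiff ℝ ((⊤ : ℕ∞) : WithTop ℕ∞) k := by
    rw [hkeq]; exact (hγ₁''.mul hγ₂'.neg).add (hγ₂''.mul hγ₁')
  have hk' : ContDiff ℝ ((⊤ : ℕ∞) : WithTop ℕ∞) (deriv k) := (contDiff_infty_iff_deriv.mp hksm).2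
  have hkd : Differentiable ℝ k := hksm.differentiable (by simp)
  have hkd' : Differentiable ℝ (deriv k) := hk'.differentiable (by simp)
  have hd1 : Differentiable ℝ γ₁ := hγ₁.differentiable (by simp)
  have hd2 : Differentiable ℝ γ₂ := hγ₂.differentiable (by simp)
  have hd1' : Differentiable ℝ (deriv γ₁) := hγ₁'.differentiable (by simp)
  have hd2' : Differentiable ℝ (deriv γ₂) := hγ₂'.differentiable (by simp)
  -- tangential component of acceleration vanishes
  have hT : ∀ s, deriv γ₁ s * deriv (deriv γ₁) s + deriv γ₂ s * deriv (deriv γ₂) s = 0 := by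
    intro s
    have hc : deriv (fun t => (deriv γ₁ t) ^ 2 + (deriv γ₂ t) ^ 2) s = 0 := by
      have : (fun t => (deriv γ₁ t) ^ 2 + (deriv γ₂ t) ^ 2) = fun _ => (1 : ℝ) :=
        funext fun t => harc t
      rw [this, deriv_const]
    have H : HasDerivAt (fun t => (deriv γ₁ t) ^ 2 + (deriv γ₂ t) ^ 2)
        (2 * deriv γ₁ s ^ 1 * deriv (deriv γ₁) s + 2 * deriv γ₂ s ^ 1 * deriv (deriv γ₂) s) s :=
      (((hd1' s).hasDerivAt.pow 2).add ((hd2' s).hasDerivAt.pow 2))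
    have := H.deriv
    rw [hc] at this
    nlinarith [this]
  -- Frenet relations
  have hF1 : ∀ s, deriv (deriv γ₁) s = k s * n₁ s := by
    intro s
    rw [hk, hn₁, hn₂]
    linear_combination (-(deriv (deriv γ₁) s)) * harc s + deriv γ₁ s * hT s
  have hF2 : ∀ s, deriv (deriv γ₂) s = k s * n₂ s := by
    intro s
    rw [hk, hn₁, hn₂]
    linear_combination (-(deriv (deriv γ₂) s)) * harc s + deriv γ₂ s * hT s
  intro s
  -- first derivative
  have hf' : deriv (fun t => k t ^ 2 - (γ₁ t ^ 2 + γ₂ t ^ 2) / 4)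
      = fun t => 2 * k t ^ 1 * deriv k t
        - (2 * γ₁ t ^ 1 * deriv γ₁ t + 2 * γ₂ t ^ 1 * deriv γ₂ t) / 4 := by
    funext t
    exact (((hkd t).hasDerivAt.pow 2).sub
      ((((hd1 t).hasDerivAt.pow 2).add ((hd2 t).hasDerivAt.pow 2)).div_const 4)).deriv
  rw [hf']
  -- second derivative
  have H2 := ((((hkd s).hasDerivAt.pow 1).const_mul 2).mul (hkd' s).hasDerivAt).sub
      ((((((hd1 s).hasDerivAt.pow 1).const_mul 2).mul (hd1' s).hasDerivAt).add
        ((((hd2 s).hasDerivAt.pow 1).const_mul 2).mul (hd2' s).hasDerivAt)).div_const 4)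
  rw [(show HasDerivAt (fun t => 2 * k t ^ 1 * deriv k t - (2 * γ₁ t ^ 1 * deriv γ₁ t + 2 * γ₂ t ^ 1 * deriv γ₂ t) / 4) _ s from H2).deriv]; simp only [Pi.pow_apply, Nat.cast_one, Nat.sub_self, pow_zero]
  have hp := hprofile s
  have h1 := hF1 s
  have h2 := hF2 s
  have ha := harc s
  linear_combination (-(1/2) : ℝ) * ha - (γ₁ s / 2) * h1 - (γ₂ s / 2) * h2 - 2 * k s * hp
end

section
/- There is no smooth compact (closed) profile curve of a forward self-similar solution to the planar surface diffusion flow: if γ : ℝ → ℝ² is a smooth arclength-parametrized curve with unit normal n = (−γ₂', γ₁') and curvature k = γ''·n satisfying (γ(s)·n(s))/4 = −k''(s) for all s ∈ ℝ, and γ is periodic, i.e. there exists L > 0 with γ(s + L) = γ(s) for all s ∈ ℝ, then a contradiction follows (no such γ exists). -/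
/-- There is no smooth compact (periodic) profile curve of a forward self-similar
solution to the planar surface diffusion flow. -/
theorem stmt_3 (γ₁ γ₂ : ℝ → ℝ) (hγ₁ : ContDiff ℝ (⊤ : ℕ∞) γ₁) (hγ₂ : ContDiff ℝ (⊤ : ℕ∞) γ₂)
    (harc : ∀ s : ℝ, (deriv γ₁ s) ^ 2 + (deriv γ₂ s) ^ 2 = 1)
    (n₁ n₂ k : ℝ → ℝ)
    (hn₁ : ∀ s, n₁ s = -deriv γ₂ s) (hn₂ : ∀ s, n₂ s = deriv γ₁ s)
    (hk : ∀ s, k s = deriv (deriv γ₁) s * n₁ s + deriv (deriv γ₂) s * n₂ s)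
    (hprofile : ∀ s : ℝ, (γ₁ s * n₁ s + γ₂ s * n₂ s) / 4 = -deriv (deriv k) s)
    (L : ℝ) (hL : 0 < L)
    (hper : ∀ s : ℝ, γ₁ (s + L) = γ₁ s ∧ γ₂ (s + L) = γ₂ s) :
    False := by
  have hγ₁ : ContDiff ℝ (⊤:ℕ∞) γ₁ := hγ₁.of_le (by simp)
  have hγ₂ : ContDiff ℝ (⊤:ℕ∞) γ₂ := hγ₂.of_le (by simp)
  have hg₁ : ContDiff ℝ (⊤:ℕ∞) (deriv γ₁) := (contDiff_infty_iff_deriv.mp hγ₁).2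
  have hg₂ : ContDiff ℝ (⊤:ℕ∞) (deriv γ₂) := (contDiff_infty_iff_deriv.mp hγ₂).2
  have hg₁' : ContDiff ℝ (⊤:ℕ∞) (deriv (deriv γ₁)) := (contDiff_infty_iff_deriv.mp hg₁).2
  have hg₂' : ContDiff ℝ (⊤:ℕ∞) (deriv (deriv γ₂)) := (contDiff_infty_iff_deriv.mp hg₂).2
  have hkfun : k = fun s => deriv (deriv γ₁) s * (-deriv γ₂ s) +
      deriv (deriv γ₂) s * deriv γ₁ s := by
    funext s; rw [hk, hn₁, hn₂]
  have hkc : ContDiff ℝ (⊤:ℕ∞) k := by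
    rw [hkfun]; exact (hg₁'.mul hg₂.neg).add (hg₂'.mul hg₁)
  have hkc' : ContDiff ℝ (⊤:ℕ∞) (deriv k) := (contDiff_infty_iff_deriv.mp hkc).2
  have H : ∀ (f : ℝ → ℝ), ContDiff ℝ (⊤:ℕ∞) f → ∀ s : ℝ, HasDerivAt f (deriv f s) s :=
    fun f hf s => (hf.differentiable (by simp) s).hasDerivAt
  -- differentiate the arclength condition
  have horth : ∀ s, deriv γ₁ s * deriv (deriv γ₁) s + deriv γ₂ s * deriv (deriv γ₂) s = 0 := by
    intro s
    have h1 : HasDerivAt (fun s => (deriv γ₁ s) ^ 2 + (deriv γ₂ s) ^ 2)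
        ((2 : ℕ) * deriv γ₁ s ^ 1 * deriv (deriv γ₁) s +
          (2 : ℕ) * deriv γ₂ s ^ 1 * deriv (deriv γ₂) s) s :=
      ((H _ hg₁ s).pow 2).add ((H _ hg₂ s).pow 2)
    have h2 : (fun s => (deriv γ₁ s) ^ 2 + (deriv γ₂ s) ^ 2) = fun _ => (1 : ℝ) :=
      funext harc
    rw [h2] at h1
    have h3 := (hasDerivAt_const s (1 : ℝ)).unique h1
    push_cast at h3
    nlinarith [h3]
  -- second derivatives of γ from the frame equations
  have hA : ∀ s, deriv (deriv γ₁) s = -(k s * deriv γ₂ s) := by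
    intro s
    have e1 := horth s
    have e2 := hk s
    rw [hn₁, hn₂] at e2
    linear_combination (deriv γ₁ s) * e1 + (deriv γ₂ s) * e2 - (deriv (deriv γ₁) s) * (harc s)
  have hB : ∀ s, deriv (deriv γ₂) s = k s * deriv γ₁ s := by
    intro s
    have e1 := horth s
    have e2 := hk s
    rw [hn₁, hn₂] at e2
    linear_combination (deriv γ₂ s) * e1 - (deriv γ₁ s) * e2 - (deriv (deriv γ₂) s) * (harc s)
  -- periodicity of derivatives
  have pshift : ∀ (f : ℝ → ℝ), (∀ s, f (s + L) = f s) → ∀ s, deriv f (s + L) = deriv f s := by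
    intro f hf s
    have h2 : (fun t => f (t + L)) = f := funext hf
    calc deriv f (s + L) = deriv (fun t => f (t + L)) s := (deriv_comp_add_const f L s).symm
      _ = deriv f s := by rw [h2]
  have p₁ : ∀ s, γ₁ (s + L) = γ₁ s := fun s => (hper s).1
  have p₂ : ∀ s, γ₂ (s + L) = γ₂ s := fun s => (hper s).2
  have pg₁ := pshift _ p₁
  have pg₂ := pshift _ p₂
  have pg₁' := pshift _ pg₁
  have pg₂' := pshift _ pg₂
  have pk : ∀ s, k (s + L) = k s := by
    intro s; rw [hkfun]; simp only [pg₁, pg₂, pg₁', pg₂']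
  have pk' := pshift _ pk
  -- the monotone quantity G = (k² + |γ|²/4)'
  set G : ℝ → ℝ := fun s => 2 * (k s * deriv k s) +
    (γ₁ s * deriv γ₁ s + γ₂ s * deriv γ₂ s) / 2 with hG
  have hGd : ∀ s, HasDerivAt G
      (2 * (deriv k s * deriv k s + k s * deriv (deriv k) s) +
        (deriv γ₁ s * deriv γ₁ s + γ₁ s * deriv (deriv γ₁) s +
          (deriv γ₂ s * deriv γ₂ s + γ₂ s * deriv (deriv γ₂) s)) / 2) s := by
    intro s
    exact (((H _ hkc s).mul (H _ hkc' s)).const_mul 2).add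
      ((((H _ hγ₁ s).mul (H _ hg₁ s)).add ((H _ hγ₂ s).mul (H _ hg₂ s))).div_const 2)
  have key : ∀ s, 2 * (deriv k s * deriv k s + k s * deriv (deriv k) s) +
      (deriv γ₁ s * deriv γ₁ s + γ₁ s * deriv (deriv γ₁) s +
        (deriv γ₂ s * deriv γ₂ s + γ₂ s * deriv (deriv γ₂) s)) / 2
      = 1 / 2 + 2 * (deriv k s) ^ 2 := by
    intro s
    have hp := hprofile s
    rw [hn₁, hn₂] at hp
    have ha := hA s
    have hb := hB s
    have hc := harc s
    linear_combination (2 * k s) * hp + (γ₁ s / 2) * ha + (γ₂ s / 2) * hb + (1/2) * hc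
  have hmono : StrictMono G := by
    apply strictMono_of_hasDerivAt_pos (f' := fun s => 1 / 2 + 2 * (deriv k s) ^ 2)
    · intro s
      have := hGd s
      rwa [key s] at this
    · intro s; positivity
  have hGper : G (0 + L) = G 0 := by
    simp only [hG, pk, pk', p₁, p₂, pg₁, pg₂]
  have : G 0 < G (0 + L) := hmono (by linarith)
  linarith
end

section
/- Let φ : ℝ → ℝ be a smooth function satisfying the graph-like forward self-similar profile equation, and suppose there exist α, β ∈ ℝ such that φ(0)·φ(x₁) ≤ α·s(x₁) + β for all x₁ ∈ ℝ. Define Q_{αβ}(x₁) := k(x₁)² + (1/4)·( x₁² + φ(x₁)² − s(x₁)² + φ(0)² − 2α·s(x₁) − 2β ). Then (i) Q_{αβ}(x₁) ≤ k(x₁)² for all x₁ ∈ ℝ, and (ii) (1/v)·d/dx[ (1/v)·(d/dx Q_{αβ}) ](x₁) = 2·( k'(x₁)/v(x₁) )² ≥ 0 for all x₁ ∈ ℝ, i.e. Q_{αβ} is convex as a function of the arclength parameter s. -/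
/-- For a graph-like forward self-similar profile `φ` with
`φ(0) φ(x₁) ≤ α s(x₁) + β`, the quantity
`Q_{αβ} = k² + (x₁² + φ² - s² + φ(0)² - 2αs - 2β)/4` satisfies `Q_{αβ} ≤ k²` and is
convex in the arclength parameter: `∂ₛ² Q_{αβ} = 2 (∂ₛ k)² ≥ 0`. -/
theorem stmt_7 (φ v k s : ℝ → ℝ) (hφ : ContDiff ℝ (⊤ : ℕ∞) φ)
    (hv : ∀ x, v x = Real.sqrt (1 + deriv φ x ^ 2))
    (hk : ∀ x, k x = deriv (deriv φ) x / v x ^ 3)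
    (hs : ∀ x₁, s x₁ = ∫ z in (0:ℝ)..x₁, Real.sqrt (1 + deriv φ z ^ 2))
    (hprofile : ∀ x : ℝ,
      (φ x - x * deriv φ x) / 4 = -deriv (fun t => deriv k t / v t) x)
    (α β : ℝ)
    (hbound : ∀ x₁ : ℝ, φ 0 * φ x₁ ≤ α * s x₁ + β)
    (Q : ℝ → ℝ)
    (hQ : ∀ x₁, Q x₁ = k x₁ ^ 2 +
      (x₁ ^ 2 + φ x₁ ^ 2 - s x₁ ^ 2 + φ 0 ^ 2 - 2 * α * s x₁ - 2 * β) / 4) :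
    (∀ x₁ : ℝ, Q x₁ ≤ k x₁ ^ 2) ∧
      (∀ x₁ : ℝ,
        (1 / v x₁) * deriv (fun t => (1 / v t) * deriv Q t) x₁
          = 2 * (deriv k x₁ / v x₁) ^ 2) := by
  have hchord : ∀ x₁ : ℝ, x₁^2 + (φ x₁ - φ 0)^2 ≤ s x₁ ^ 2 := by
    have hφ' : Continuous (deriv φ) := ((contDiff_infty_iff_deriv.mp (hφ.of_le (by simp))).2).continuous
    have hvcont : Continuous (fun z => Real.sqrt (1 + deriv φ z ^ 2)) := by
      exact (continuous_const.add (hφ'.pow 2)).sqrt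
    intro x₁
    set a := x₁ with ha
    set b := φ x₁ - φ 0 with hb
    set c := Real.sqrt (a^2 + b^2) with hcdef
    have hc : (0:ℝ) ≤ c := Real.sqrt_nonneg _
    have hc2 : c ^ 2 = a^2+b^2 := Real.sq_sqrt (by positivity)
    -- pointwise bound
    have hpt : ∀ z : ℝ, a + b * deriv φ z ≤ c * Real.sqrt (1 + deriv φ z ^2) := by
      intro z
      set p := deriv φ z
      have hq : (0:ℝ) ≤ Real.sqrt (1+p^2) := Real.sqrt_nonneg _
      have hq2 : Real.sqrt (1+p^2) ^ 2 = 1+p^2 := Real.sq_sqrt (by positivity)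
      nlinarith [sq_nonneg (b - a*p), sq_nonneg (c * Real.sqrt (1+p^2) - (a + b*p)), mul_nonneg hc hq]
    have hptn : ∀ z : ℝ, -a + -b * deriv φ z ≤ c * Real.sqrt (1 + deriv φ z ^2) := by
      intro z
      set p := deriv φ z
      have hq : (0:ℝ) ≤ Real.sqrt (1+p^2) := Real.sqrt_nonneg _
      have hq2 : Real.sqrt (1+p^2) ^ 2 = 1+p^2 := Real.sq_sqrt (by positivity)
      nlinarith [sq_nonneg (b - a*p), sq_nonneg (c * Real.sqrt (1+p^2) + (a + b*p)), mul_nonneg hc hq]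
    have hdiff : ∀ z ∈ Set.uIcc (0:ℝ) x₁, DifferentiableAt ℝ φ z := fun z _ => hφ.differentiable (by simp) z
    have hint : ∀ (u w : ℝ), ∫ z in u..w, (a + b * deriv φ z) = a * (w - u) + b * (φ w - φ u) := by
      intro u w
      rw [intervalIntegral.integral_add (intervalIntegrable_const)
        ((hφ'.intervalIntegrable u w).const_mul b)]
      rw [intervalIntegral.integral_const, intervalIntegral.integral_const_mul,
        intervalIntegral.integral_deriv_eq_sub (fun z _ => hφ.differentiable (by simp) z)
          (hφ'.intervalIntegrable u w)]
      ring_nf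
    rcases le_total 0 x₁ with hx | hx
    · have hmono : ∫ z in (0:ℝ)..x₁, (a + b * deriv φ z) ≤ ∫ z in (0:ℝ)..x₁, c * Real.sqrt (1 + deriv φ z ^ 2) := by
        apply intervalIntegral.integral_mono_on hx
          ((continuous_const.add (continuous_const.mul hφ')).intervalIntegrable _ _)
          ((continuous_const.mul hvcont).intervalIntegrable _ _)
        intro z _; exact hpt z
      rw [hint, intervalIntegral.integral_const_mul, ← hs] at hmono
      have h1 : a^2 + b^2 ≤ c * s x₁ := by
        calc a^2+b^2 = a*(x₁-0)+b*(φ x₁-φ 0) := by rw [ha, hb]; ring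
          _ ≤ c * s x₁ := hmono
      have hs0 : 0 ≤ s x₁ := by
        rw [hs]
        apply intervalIntegral.integral_nonneg hx
        intro z _; positivity
      nlinarith [sq_nonneg (c - s x₁)]
    · have hmono : ∫ z in x₁..(0:ℝ), (-a + -b * deriv φ z) ≤ ∫ z in x₁..(0:ℝ), c * Real.sqrt (1 + deriv φ z ^ 2) := by
        apply intervalIntegral.integral_mono_on hx
          ((continuous_const.add (continuous_const.mul hφ')).intervalIntegrable _ _)
          ((continuous_const.mul hvcont).intervalIntegrable _ _)
        intro z _; exact hptn z
      have hintn : ∫ z in x₁..(0:ℝ), (-a + -b * deriv φ z) = a^2 + b^2 := by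
        have := hint x₁ 0
        have h2 : ∫ z in x₁..(0:ℝ), (-a + -b * deriv φ z) = -∫ z in x₁..(0:ℝ), (a + b * deriv φ z) := by
          rw [← intervalIntegral.integral_neg]; congr 1; funext z; ring
        rw [h2, this]; simp [ha, hb]; ring
      have hsneg : s x₁ = - ∫ z in x₁..(0:ℝ), Real.sqrt (1 + deriv φ z ^ 2) := by
        rw [hs, intervalIntegral.integral_symm]
      rw [hintn, intervalIntegral.integral_const_mul] at hmono
      have h1 : a^2 + b^2 ≤ c * (- s x₁) := by rw [hsneg]; simpa using hmono
      have hs0 : 0 ≤ - s x₁ := by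
        rw [hsneg, neg_neg]
        apply intervalIntegral.integral_nonneg hx
        intro z _; positivity
      nlinarith [sq_nonneg (c + s x₁)]
  constructor
  · intro x₁
    rw [hQ x₁]
    nlinarith [hchord x₁, hbound x₁]
  · have hφI : ContDiff ℝ (⊤ : ℕ∞) φ := hφ.of_le (by simp)
    have hφ1 : ContDiff ℝ (⊤ : ℕ∞) (deriv φ) := (contDiff_infty_iff_deriv.mp hφI).2
    have hφ2 : ContDiff ℝ (⊤ : ℕ∞) (deriv (deriv φ)) := (contDiff_infty_iff_deriv.mp hφ1).2
    have hvpos : ∀ x, 0 < v x := by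
      intro x; rw [hv x]; positivity
    have hvne : ∀ x, v x ≠ 0 := fun x => (hvpos x).ne'
    have hvsq : ∀ x, v x ^ 2 = 1 + deriv φ x ^ 2 := by
      intro x; rw [hv x, Real.sq_sqrt]; positivity
    have hvcd : ContDiff ℝ (⊤ : ℕ∞) v := by
      have : v = fun x => Real.sqrt (1 + deriv φ x ^ 2) := funext hv
      rw [this]
      rw [contDiff_iff_contDiffAt]
      intro x
      exact ((contDiff_const.add (hφ1.pow 2)).contDiffAt).sqrt (by positivity)
    have hkcd : ContDiff ℝ (⊤ : ℕ∞) k := by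
      have : k = fun x => deriv (deriv φ) x / v x ^ 3 := funext hk
      rw [this]
      exact hφ2.div (hvcd.pow 3) (fun x => pow_ne_zero 3 (hvne x))
    have hk1 : ContDiff ℝ (⊤ : ℕ∞) (deriv k) := (contDiff_infty_iff_deriv.mp hkcd).2
    -- pointwise HasDerivAt facts
    have hφ'd : ∀ x, HasDerivAt φ (deriv φ x) x := fun x =>
      ((hφI.differentiable (by simp)) x).hasDerivAt
    have hφ''d : ∀ x, HasDerivAt (deriv φ) (deriv (deriv φ) x) x := fun x =>
      ((hφ1.differentiable (by simp)) x).hasDerivAt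
    have hvd : ∀ x, HasDerivAt v (deriv φ x * deriv (deriv φ) x / v x) x := by
      intro x
      have h1 : HasDerivAt (fun t => 1 + deriv φ t ^ 2)
          (2 * deriv φ x ^ 1 * deriv (deriv φ) x) x := (((hφ''d x)).pow 2).const_add 1
      have h2 := h1.sqrt (by positivity)
      have hveq : v = fun t => Real.sqrt (1 + deriv φ t ^ 2) := funext hv
      rw [← hveq, ← hv] at h2
      convert h2 using 1
      field_simp
    have hsd : ∀ x, HasDerivAt s (v x) x := by
      intro x
      have hseq : s = fun u => ∫ z in (0:ℝ)..u, Real.sqrt (1 + deriv φ z ^ 2) := funext hs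
      have hvcont : Continuous (fun z => Real.sqrt (1 + deriv φ z ^ 2)) :=
        (continuous_const.add (hφ1.continuous.pow 2)).sqrt
      have := intervalIntegral.integral_hasDerivAt_right
        (hvcont.intervalIntegrable 0 x) (hvcont.stronglyMeasurableAtFilter _ _)
        hvcont.continuousAt
      rw [← hseq, ← hv] at this
      exact this
    have hkd : ∀ x, HasDerivAt k (deriv k x) x := fun x =>
      ((hkcd.differentiable (by simp)) x).hasDerivAt
    -- derivative of Q
    have hQd : ∀ x, HasDerivAt Q
        (2 * k x * deriv k x + (2*x + 2*φ x*deriv φ x - 2*s x*v x - 2*α*v x)/4) x := by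
      intro x
      have hQeq : Q = fun t => k t ^ 2 +
          (t ^ 2 + φ t ^ 2 - s t ^ 2 + φ 0 ^ 2 - 2 * α * s t - 2 * β) / 4 := funext hQ
      rw [hQeq]
      have h1 : HasDerivAt (fun t : ℝ => k t ^ 2) (2 * k x ^ 1 * deriv k x) x := (hkd x).pow 2
      have h2 : HasDerivAt (fun t : ℝ => t ^ 2) (2 * x ^ 1 * 1) x := (hasDerivAt_id x).pow 2
      have h3 : HasDerivAt (fun t : ℝ => φ t ^ 2) (2 * φ x ^ 1 * deriv φ x) x := (hφ'd x).pow 2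
      have h4 : HasDerivAt (fun t : ℝ => s t ^ 2) (2 * s x ^ 1 * v x) x := (hsd x).pow 2
      have h5 : HasDerivAt (fun t : ℝ => 2 * α * s t) (2 * α * v x) x := (hsd x).const_mul _
      have h6 := ((((((h2.add h3).sub h4).add_const (φ 0 ^2)).sub h5).sub_const (2*β)).div_const 4)
      have h7 : HasDerivAt (fun t => k t ^ 2 +
          (t ^ 2 + φ t ^ 2 - s t ^ 2 + φ 0 ^ 2 - 2 * α * s t - 2 * β) / 4) _ x := h1.add h6
      convert h7 using 1 <;> ring
    have hG : (fun t => (1 / v t) * deriv Q t) =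
        fun t => 2 * k t * (deriv k t / v t) + (t + φ t * deriv φ t)/(2 * v t) - (s t + α)/2 := by
      funext t
      rw [(hQd t).deriv]
      have := hvne t
      field_simp
      ring
    intro x
    rw [hG]
    have hwd : HasDerivAt (fun t => deriv k t / v t) (-((φ x - x * deriv φ x)/4)) x := by
      have hd : DifferentiableAt ℝ (fun t => deriv k t / v t) x :=
        ((hk1.differentiable (by simp)) x).div
          ((hvcd.differentiable (by simp)) x) (hvne x)
      have h := hd.hasDerivAt
      rwa [show deriv (fun t => deriv k t / v t) x = -((φ x - x * deriv φ x)/4) by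
        linarith [hprofile x]] at h
    have hT1 : HasDerivAt (fun t => 2 * k t * (deriv k t / v t))
        (2 * deriv k x * (deriv k x / v x) + 2 * k x * (-((φ x - x * deriv φ x)/4))) x := by
      have h : HasDerivAt (fun t => 2 * k t * (deriv k t / v t)) _ x := ((hkd x).const_mul 2).mul hwd
      convert h using 1 <;> ring
    have hT2 : HasDerivAt (fun t => (t + φ t * deriv φ t)/(2 * v t))
        (((1 + (deriv φ x * deriv φ x + φ x * deriv (deriv φ) x)) * (2 * v x) -
          (x + φ x * deriv φ x) * (2 * (deriv φ x * deriv (deriv φ) x / v x))) / (2 * v x)^2) x := by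
      exact ((hasDerivAt_id x).add ((hφ'd x).mul (hφ''d x))).div ((hvd x).const_mul 2)
        (by simpa using hvne x)
    have hT3 : HasDerivAt (fun t => (s t + α)/2) (v x / 2) x :=
      ((hsd x).add_const α).div_const 2
    have hTot : HasDerivAt (fun t => 2 * k t * (deriv k t / v t) + (t + φ t * deriv φ t)/(2 * v t) - (s t + α)/2) _ x := (hT1.add hT2).sub hT3
    rw [hTot.deriv]
    have hpp : deriv (deriv φ) x = k x * v x ^ 3 := by
      rw [hk x]; field_simp [hvne x]
    rw [hpp]
    have h2 := hvsq x
    have hvx := hvne x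
    field_simp
    linear_combination (-4 + 4 * v x * k x * φ x) * h2
end

section
/- Let φ : ℝ → ℝ be a smooth function satisfying the graph-like forward self-similar profile equation. If φ(0) = 0, then φ is linear through the origin: there exists c ∈ ℝ such that φ(x₁) = c·x₁ for all x₁ ∈ ℝ. -/
open Real Set

namespace SD

noncomputable def Vf (φ : ℝ → ℝ) (x : ℝ) : ℝ := Real.sqrt (1 + deriv φ x ^ 2)
noncomputable def Kf (φ : ℝ → ℝ) (x : ℝ) : ℝ := deriv (deriv φ) x / Vf φ x ^ 3
noncomputable def Mf (φ : ℝ → ℝ) (x : ℝ) : ℝ := deriv (Kf φ) x / Vf φ x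
noncomputable def Wf (φ : ℝ → ℝ) (x : ℝ) : ℝ := φ x - x * deriv φ x

lemma Vf_one_le (φ : ℝ → ℝ) (x : ℝ) : 1 ≤ Vf φ x :=
  Real.one_le_sqrt.mpr (by nlinarith [sq_nonneg (deriv φ x)])

lemma Vf_pos (φ : ℝ → ℝ) (x : ℝ) : 0 < Vf φ x := lt_of_lt_of_le one_pos (Vf_one_le φ x)

lemma Vf_cube_one_le (φ : ℝ → ℝ) (x : ℝ) : 1 ≤ Vf φ x ^ 3 :=
  one_le_pow₀ (Vf_one_le φ x)

lemma one_le_inf : ((⊤:ℕ∞) : WithTop ℕ∞) ≠ 0 := by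
  exact_mod_cast (ENat.top_ne_zero : (⊤:ℕ∞) ≠ 0)

section Basic

variable {φ : ℝ → ℝ}

lemma contDiff_P (hφ : ContDiff ℝ (⊤:ℕ∞) φ) : ContDiff ℝ (⊤:ℕ∞) (deriv φ) :=
  (contDiff_infty_iff_deriv.mp hφ).2

lemma contDiff_Q (hφ : ContDiff ℝ (⊤:ℕ∞) φ) : ContDiff ℝ (⊤:ℕ∞) (deriv (deriv φ)) :=
  (contDiff_infty_iff_deriv.mp (contDiff_P hφ)).2

lemma contDiff_V (hφ : ContDiff ℝ (⊤:ℕ∞) φ) : ContDiff ℝ (⊤:ℕ∞) (Vf φ) := by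
  have h1 : ContDiff ℝ (⊤:ℕ∞) (fun x => 1 + deriv φ x ^ 2) :=
    contDiff_const.add ((contDiff_P hφ).pow 2)
  refine contDiff_iff_contDiffAt.mpr fun x => ?_
  exact h1.contDiffAt.sqrt (by positivity)

lemma contDiff_K (hφ : ContDiff ℝ (⊤:ℕ∞) φ) : ContDiff ℝ (⊤:ℕ∞) (Kf φ) :=
  (contDiff_Q hφ).div ((contDiff_V hφ).pow 3)
    (fun x => (pow_pos (Vf_pos φ x) 3).ne')

lemma contDiff_M (hφ : ContDiff ℝ (⊤:ℕ∞) φ) : ContDiff ℝ (⊤:ℕ∞) (Mf φ) :=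
  ((contDiff_infty_iff_deriv.mp (contDiff_K hφ)).2).div (contDiff_V hφ)
    (fun x => (Vf_pos φ x).ne')

lemma contDiff_W (hφ : ContDiff ℝ (⊤:ℕ∞) φ) : ContDiff ℝ (⊤:ℕ∞) (Wf φ) :=
  hφ.sub (contDiff_id.mul (contDiff_P hφ))

lemma derivK_eq (φ : ℝ → ℝ) (x : ℝ) : deriv (Kf φ) x = Mf φ x * Vf φ x := by
  unfold Mf; rw [div_mul_cancel₀ _ (Vf_pos φ x).ne']

lemma Q_eq (φ : ℝ → ℝ) (x : ℝ) : deriv (deriv φ) x = Kf φ x * Vf φ x ^ 3 := by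
  unfold Kf; rw [div_mul_cancel₀ _ (pow_pos (Vf_pos φ x) 3).ne']

lemma hasDerivAt_P (hφ : ContDiff ℝ (⊤:ℕ∞) φ) (x : ℝ) :
    HasDerivAt (deriv φ) (deriv (deriv φ) x) x :=
  (((contDiff_P hφ).differentiable one_le_inf) x).hasDerivAt

lemma hasDerivAt_K (hφ : ContDiff ℝ (⊤:ℕ∞) φ) (x : ℝ) :
    HasDerivAt (Kf φ) (Mf φ x * Vf φ x) x := by
  rw [← derivK_eq]
  exact (((contDiff_K hφ).differentiable one_le_inf) x).hasDerivAt

lemma hasDerivAt_W (hφ : ContDiff ℝ (⊤:ℕ∞) φ) (x : ℝ) :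
    HasDerivAt (Wf φ) (-(x * (Kf φ x * Vf φ x ^ 3))) x := by
  have h1 : HasDerivAt φ (deriv φ x) x := ((hφ.differentiable one_le_inf) x).hasDerivAt
  have h3 : HasDerivAt (fun y => y * deriv φ y)
      (1 * deriv φ x + x * deriv (deriv φ) x) x :=
    (hasDerivAt_id x).mul (hasDerivAt_P hφ x)
  have h4 := h1.sub h3
  have h5 : deriv φ x - (1 * deriv φ x + x * deriv (deriv φ) x)
      = -(x * (Kf φ x * Vf φ x ^ 3)) := by rw [← Q_eq]; ring
  rw [h5] at h4
  exact h4

lemma derivW_eq (hφ : ContDiff ℝ (⊤:ℕ∞) φ) (x : ℝ) :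
    deriv (Wf φ) x = -(x * (Kf φ x * Vf φ x ^ 3)) :=
  (hasDerivAt_W hφ x).deriv

lemma hasDerivAt_M (hφ : ContDiff ℝ (⊤:ℕ∞) φ)
    (hpro : ∀ x, deriv (Mf φ) x = -(Wf φ x)/4) (x : ℝ) :
    HasDerivAt (Mf φ) (-(Wf φ x)/4) x := by
  rw [← hpro x]
  exact (((contDiff_M hφ).differentiable one_le_inf) x).hasDerivAt

end Basic



section Forward

variable {φ : ℝ → ℝ}

lemma exists_pos_on {f : ℝ → ℝ} (hf : Continuous f) (h0 : 0 < f 0) :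
    ∃ ε > 0, ∀ y ∈ Icc 0 ε, 0 < f y := by
  have ho : IsOpen (f ⁻¹' Ioi 0) := (isOpen_Ioi).preimage hf
  have h0m : (0:ℝ) ∈ f ⁻¹' Ioi 0 := h0
  obtain ⟨ε, hε, hball⟩ := Metric.isOpen_iff.mp ho 0 h0m
  refine ⟨ε/2, by positivity, fun y hy => ?_⟩
  have : y ∈ Metric.ball (0:ℝ) ε := by
    rw [Metric.mem_ball, Real.dist_eq, sub_zero, abs_of_nonneg hy.1]
    linarith [hy.2]
  exact hball this

lemma W_neg_on (hφ : ContDiff ℝ (⊤:ℕ∞) φ) (hW0 : Wf φ 0 = 0) {ε : ℝ} (hε : 0 < ε)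
    (hK : ∀ y ∈ Ioo 0 ε, 0 < Kf φ y) :
    ∀ y, 0 < y → y ≤ ε → Wf φ y < 0 := by
  have hanti : StrictAntiOn (Wf φ) (Icc 0 ε) := by
    refine strictAntiOn_of_deriv_neg (convex_Icc _ _)
      ((contDiff_W hφ).continuous.continuousOn) (fun z hz => ?_)
    rw [interior_Icc] at hz
    rw [derivW_eq hφ]
    have h1 := hK z hz
    have h2 := Vf_pos φ z
    have h3 : 0 < z := hz.1
    exact neg_lt_zero.mpr (mul_pos h3 (mul_pos h1 (pow_pos h2 3)))
  intro y hy hyε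
  have := hanti ⟨le_refl _, hε.le⟩ ⟨hy.le, hyε⟩ hy
  rw [hW0] at this
  exact this

lemma entry (hφ : ContDiff ℝ (⊤:ℕ∞) φ) (hpro : ∀ x, deriv (Mf φ) x = -(Wf φ x)/4)
    (hW0 : Wf φ 0 = 0) (hK0 : 0 ≤ Kf φ 0) (hM0 : 0 ≤ Mf φ 0)
    (hne : Kf φ 0 ≠ 0 ∨ Mf φ 0 ≠ 0) :
    ∃ x₀, 0 < x₀ ∧ 0 < Kf φ x₀ ∧ 0 < Mf φ x₀ ∧ Wf φ x₀ < 0 := by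
  rcases eq_or_lt_of_le hM0 with hM0' | hM0'
  · -- M 0 = 0, so K 0 > 0
    have hK0' : 0 < Kf φ 0 := by
      rcases hne with h | h
      · exact lt_of_le_of_ne hK0 (Ne.symm h)
      · exact absurd hM0'.symm h
    obtain ⟨ε, hε, hKpos⟩ := exists_pos_on ((contDiff_K hφ).continuous) hK0'
    have hWneg := W_neg_on hφ hW0 hε (fun y hy => hKpos y ⟨hy.1.le, hy.2.le⟩)
    have hMmono : StrictMonoOn (Mf φ) (Icc 0 ε) := by
      refine strictMonoOn_of_deriv_pos (convex_Icc _ _)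
        ((contDiff_M hφ).continuous.continuousOn) (fun z hz => ?_)
      rw [interior_Icc] at hz
      rw [hpro z]
      have := hWneg z hz.1 hz.2.le
      linarith
    refine ⟨ε, hε, hKpos ε ⟨hε.le, le_refl _⟩, ?_, hWneg ε hε (le_refl _)⟩
    have := hMmono ⟨le_refl _, hε.le⟩ ⟨hε.le, le_refl _⟩ hε
    rw [← hM0'] at this
    exact this
  · -- M 0 > 0
    obtain ⟨ε, hε, hMpos⟩ := exists_pos_on ((contDiff_M hφ).continuous) hM0'
    have hKmono : StrictMonoOn (Kf φ) (Icc 0 ε) := by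
      refine strictMonoOn_of_deriv_pos (convex_Icc _ _)
        ((contDiff_K hφ).continuous.continuousOn) (fun z hz => ?_)
      rw [interior_Icc] at hz
      rw [derivK_eq φ z]
      exact mul_pos (hMpos z ⟨hz.1.le, hz.2.le⟩) (Vf_pos φ z)
    have hKpos : ∀ y ∈ Ioo 0 ε, 0 < Kf φ y := by
      intro y hy
      have := hKmono ⟨le_refl _, hε.le⟩ ⟨hy.1.le, hy.2.le⟩ hy.1
      linarith
    have hWneg := W_neg_on hφ hW0 hε hKpos
    refine ⟨ε, hε, ?_, hMpos ε ⟨hε.le, le_refl _⟩, hWneg ε hε (le_refl _)⟩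
    have := hKmono ⟨le_refl _, hε.le⟩ ⟨hε.le, le_refl _⟩ hε
    linarith

lemma invariant (hφ : ContDiff ℝ (⊤:ℕ∞) φ) (hpro : ∀ x, deriv (Mf φ) x = -(Wf φ x)/4)
    {x₀ : ℝ} (hx₀ : 0 < x₀)
    (hG : 0 < Kf φ x₀ ∧ 0 < Mf φ x₀ ∧ Wf φ x₀ < 0) :
    ∀ x, x₀ ≤ x → 0 < Kf φ x ∧ 0 < Mf φ x ∧ Wf φ x < 0 := by
  intro x hx
  by_contra hxbad
  set T : Set ℝ := {z | x₀ ≤ z ∧ ¬(0 < Kf φ z ∧ 0 < Mf φ z ∧ Wf φ z < 0)} with hTdef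
  have hTne : T.Nonempty := ⟨x, hx, hxbad⟩
  have hTbdd : BddBelow T := ⟨x₀, fun z hz => hz.1⟩
  have hTclosed : IsClosed T := by
    have hrw : T = Ici x₀ ∩ ({z | 0 < Kf φ z} ∩ ({z | 0 < Mf φ z} ∩ {z | Wf φ z < 0}))ᶜ := by
      ext z
      simp only [hTdef, mem_setOf_eq, mem_inter_iff, mem_Ici, mem_compl_iff]
      try tauto
    rw [hrw]
    exact isClosed_Ici.inter (IsOpen.isClosed_compl
      ((isOpen_lt continuous_const (contDiff_K hφ).continuous).inter
        ((isOpen_lt continuous_const (contDiff_M hφ).continuous).inter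
          (isOpen_lt (contDiff_W hφ).continuous continuous_const))))
  set y := sInf T with hydef
  have hyT : y ∈ T := hTclosed.csInf_mem hTne hTbdd
  have hx₀y : x₀ < y := by
    rcases lt_or_eq_of_le hyT.1 with h | h
    · exact h
    · exact absurd (h ▸ hG) hyT.2
  have hIoo : ∀ z ∈ Ioo x₀ y, 0 < Kf φ z ∧ 0 < Mf φ z ∧ Wf φ z < 0 := by
    intro z hz
    by_contra hzbad
    exact absurd (csInf_le hTbdd ⟨hz.1.le, hzbad⟩) (not_le.mpr hz.2)
  have hMmono : StrictMonoOn (Mf φ) (Icc x₀ y) := by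
    refine strictMonoOn_of_deriv_pos (convex_Icc _ _)
      ((contDiff_M hφ).continuous.continuousOn) (fun z hz => ?_)
    rw [interior_Icc] at hz
    rw [hpro z]
    have := (hIoo z hz).2.2
    linarith
  have hKmono : StrictMonoOn (Kf φ) (Icc x₀ y) := by
    refine strictMonoOn_of_deriv_pos (convex_Icc _ _)
      ((contDiff_K hφ).continuous.continuousOn) (fun z hz => ?_)
    rw [interior_Icc] at hz
    rw [derivK_eq φ z]
    exact mul_pos (hIoo z hz).2.1 (Vf_pos φ z)
  have hWanti : StrictAntiOn (Wf φ) (Icc x₀ y) := by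
    refine strictAntiOn_of_deriv_neg (convex_Icc _ _)
      ((contDiff_W hφ).continuous.continuousOn) (fun z hz => ?_)
    rw [interior_Icc] at hz
    rw [derivW_eq hφ]
    have h1 := (hIoo z hz).1
    have h2 := Vf_pos φ z
    have h3 : 0 < z := lt_trans hx₀ hz.1
    exact neg_lt_zero.mpr (mul_pos h3 (mul_pos h1 (pow_pos h2 3)))
  have hx₀Icc : x₀ ∈ Icc x₀ y := ⟨le_refl _, hyT.1⟩
  have hyIcc : y ∈ Icc x₀ y := ⟨hyT.1, le_refl _⟩
  exact hyT.2 ⟨lt_trans hG.1 (hKmono hx₀Icc hyIcc hx₀y),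
    lt_trans hG.2.1 (hMmono hx₀Icc hyIcc hx₀y),
    lt_trans (hWanti hx₀Icc hyIcc hx₀y) hG.2.2⟩

end Forward

section Blowup

variable {φ : ℝ → ℝ}

lemma forward (hφ : ContDiff ℝ (⊤:ℕ∞) φ) (hpro : ∀ x, deriv (Mf φ) x = -(Wf φ x)/4)
    (hW0 : Wf φ 0 = 0) (hK0 : 0 ≤ Kf φ 0) (hM0 : 0 ≤ Mf φ 0)
    (hne : Kf φ 0 ≠ 0 ∨ Mf φ 0 ≠ 0) : False := by
  obtain ⟨x₀, hx₀pos, hG⟩ := entry hφ hpro hW0 hK0 hM0 hne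
  have hinv := invariant hφ hpro hx₀pos hG
  set μ := Mf φ x₀ with hμdef
  have hμ : 0 < μ := hG.2.1
  -- M ≥ μ on [x₀, ∞)
  have hMge : ∀ x, x₀ ≤ x → μ ≤ Mf φ x := by
    intro x hx
    rcases eq_or_lt_of_le hx with h | hlt
    · rw [← h]
    · have hmono : MonotoneOn (Mf φ) (Icc x₀ x) := by
        refine monotoneOn_of_deriv_nonneg (convex_Icc _ _)
          ((contDiff_M hφ).continuous.continuousOn)
          (((contDiff_M hφ).differentiable one_le_inf).differentiableOn) (fun z hz => ?_)
        rw [interior_Icc] at hz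
        rw [hpro z]
        have := (hinv z hz.1.le).2.2
        linarith
      exact hmono ⟨le_refl _, hx⟩ ⟨hx, le_refl _⟩ hx
  -- K grows linearly
  have hKlin : ∀ x, x₀ ≤ x → μ * (x - x₀) ≤ Kf φ x := by
    intro x hx
    have hmono : MonotoneOn (fun y => Kf φ y - μ * y) (Icc x₀ x) := by
      refine monotoneOn_of_deriv_nonneg (convex_Icc _ _)
        (((contDiff_K hφ).continuous.sub (continuous_const.mul continuous_id)).continuousOn)
        ((((contDiff_K hφ).differentiable one_le_inf).sub
          ((differentiable_id.const_mul μ))).differentiableOn) (fun z hz => ?_)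
      rw [interior_Icc] at hz
      have hd : deriv (fun y => Kf φ y - μ * y) z = Mf φ z * Vf φ z - μ * 1 := by
        exact ((hasDerivAt_K hφ z).sub ((hasDerivAt_id z).const_mul μ)).deriv
      rw [hd]
      have h2 := hMge z hz.1.le
      have h3 : μ * 1 ≤ Mf φ z * Vf φ z :=
        mul_le_mul h2 (Vf_one_le φ z) zero_le_one (le_trans hμ.le h2)
      linarith
    have h4 := hmono ⟨le_refl _, hx⟩ ⟨hx, le_refl _⟩ hx
    have h5 := hG.1
    simp only at h4
    nlinarith
  set x₂ := x₀ + 1/μ with hx₂def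
  have hx₀₂ : x₀ ≤ x₂ := by
    have : 0 < 1/μ := by positivity
    rw [hx₂def]
    linarith
  have hK1 : ∀ x, x₂ ≤ x → 1 ≤ Kf φ x := by
    intro x hx
    have h1 : x₀ ≤ x := le_trans hx₀₂ hx
    have h2 := hKlin x h1
    have h3 : 1/μ ≤ x - x₀ := by simp only [hx₂def] at hx; linarith
    have h4 : μ * (1/μ) ≤ μ * (x - x₀) := mul_le_mul_of_nonneg_left h3 hμ.le
    have h5 : μ * (1/μ) = 1 := by field_simp
    linarith
  have hQ1 : ∀ x, x₂ ≤ x → 1 ≤ deriv (deriv φ) x := by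
    intro x hx
    rw [Q_eq]
    nlinarith [hK1 x hx, Vf_cube_one_le φ x]
  -- P grows linearly
  have hPlin : ∀ x, x₂ ≤ x → deriv φ x₂ + (x - x₂) ≤ deriv φ x := by
    intro x hx
    rcases eq_or_lt_of_le hx with h | hlt
    · rw [← h]; simp
    · have hmono : MonotoneOn (fun y => deriv φ y - y) (Icc x₂ x) := by
        refine monotoneOn_of_deriv_nonneg (convex_Icc _ _)
          (((contDiff_P hφ).continuous.sub continuous_id).continuousOn)
          ((((contDiff_P hφ).differentiable one_le_inf).sub differentiable_id).differentiableOn)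
          (fun z hz => ?_)
        rw [interior_Icc] at hz
        have hd : deriv (fun y => deriv φ y - y) z = deriv (deriv φ) z - 1 :=
          ((hasDerivAt_P hφ z).sub (hasDerivAt_id z)).deriv
        rw [hd]
        have := hQ1 z hz.1.le
        linarith
      have := hmono ⟨le_refl _, hx⟩ ⟨hx, le_refl _⟩ hx
      simp only at this
      linarith
  set x₃ := x₂ + (1 + |deriv φ x₂|) with hx₃def
  have hx₂₃ : x₂ ≤ x₃ := by
    have := abs_nonneg (deriv φ x₂)
    linarith
  have hP1 : ∀ x, x₃ ≤ x → 1 ≤ deriv φ x := by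
    intro x hx
    have h1 := hPlin x (le_trans hx₂₃ hx)
    have h2 := neg_abs_le (deriv φ x₂)
    simp only [hx₃def] at hx
    linarith
  -- cube bound : P³ ≤ Q on [x₃, ∞)
  have hQcube : ∀ x, x₃ ≤ x → deriv φ x ^ 3 ≤ deriv (deriv φ) x := by
    intro x hx
    have hp := hP1 x hx
    have hV : deriv φ x ≤ Vf φ x := by
      have h1 : deriv φ x = Real.sqrt (deriv φ x ^ 2) := (Real.sqrt_sq (by linarith)).symm
      rw [h1]
      exact Real.sqrt_le_sqrt (by nlinarith)
    have hV3 : deriv φ x ^ 3 ≤ Vf φ x ^ 3 := pow_le_pow_left₀ (by linarith) hV 3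
    rw [Q_eq]
    have hKx := hK1 x (le_trans hx₂₃ hx)
    nlinarith [Vf_cube_one_le φ x]
  -- Riccati blow-up on [x₃, x₃ + 1]
  have hgval : ∀ z, x₃ ≤ z →
      -(2 * deriv φ z ^ 1 * deriv (deriv φ) z) / (deriv φ z ^ 2) ^ 2 ≤ -2 := by
    intro z hz
    have hp := hP1 z hz
    have hq := hQcube z hz
    rw [div_le_iff₀ (by positivity)]
    have h1 : deriv φ z * deriv φ z ^ 3 ≤ deriv φ z * deriv (deriv φ) z :=
      mul_le_mul_of_nonneg_left hq (by linarith)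
    nlinarith
  have hgd : ∀ z, x₃ ≤ z → HasDerivAt (fun y => (deriv φ y ^ 2)⁻¹)
      (-(2 * deriv φ z ^ 1 * deriv (deriv φ) z) / (deriv φ z ^ 2) ^ 2) z := by
    intro z hz
    have hp := hP1 z hz
    exact ((hasDerivAt_P hφ z).pow 2).inv (pow_ne_zero 2 (ne_of_gt (by linarith)))
  have hanti : AntitoneOn (fun y => (deriv φ y ^ 2)⁻¹ + 2 * y) (Icc x₃ (x₃ + 1)) := by
    refine antitoneOn_of_deriv_nonpos (convex_Icc _ _) ?_ ?_ ?_
    · refine ContinuousOn.add (ContinuousOn.inv₀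
        (((contDiff_P hφ).continuous.pow 2).continuousOn) (fun z hz => ?_))
        (continuous_const.mul continuous_id).continuousOn
      have := hP1 z hz.1
      positivity
    · intro z hz
      rw [interior_Icc] at hz
      exact (((hgd z hz.1.le).add ((hasDerivAt_id' z).const_mul 2)).differentiableAt).differentiableWithinAt
    · intro z hz
      rw [interior_Icc] at hz
      have hd := HasDerivAt.deriv (f := fun y => (deriv φ y ^ 2)⁻¹ + 2 * y) ((hgd z hz.1.le).add ((hasDerivAt_id' z).const_mul 2))
      rw [hd]
      have := hgval z hz.1.le
      simp only [mul_one]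
      linarith
  have hm1 : x₃ ∈ Icc x₃ (x₃ + 1) := ⟨le_refl _, by linarith⟩
  have hm2 : x₃ + 1 ∈ Icc x₃ (x₃ + 1) := ⟨by linarith, le_refl _⟩
  have h1 := hanti hm1 hm2 (by linarith)
  simp only at h1
  have hg₃ : (deriv φ x₃ ^ 2)⁻¹ ≤ 1 := by
    have hp := hP1 x₃ (le_refl _)
    rw [inv_le_one_iff₀]
    right; nlinarith
  have hgpos : 0 < (deriv φ (x₃ + 1) ^ 2)⁻¹ := by
    have hp := hP1 (x₃ + 1) (by linarith)
    positivity
  linarith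

end Blowup

section Transport

lemma neg_P (φ : ℝ → ℝ) : deriv (fun x => -φ x) = fun x => -deriv φ x :=
  funext fun _ => deriv.neg

lemma neg_Q (φ : ℝ → ℝ) :
    deriv (deriv (fun x => -φ x)) = fun x => -deriv (deriv φ) x := by
  rw [neg_P]; exact funext fun _ => deriv.neg

lemma neg_V (φ : ℝ → ℝ) : Vf (fun x => -φ x) = Vf φ := by
  funext x; unfold Vf; simp only [neg_P, neg_sq]

lemma neg_K (φ : ℝ → ℝ) : Kf (fun x => -φ x) = fun x => -Kf φ x := by
  funext x; unfold Kf; simp only [neg_Q, neg_V, neg_div]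

lemma neg_M (φ : ℝ → ℝ) : Mf (fun x => -φ x) = fun x => -Mf φ x := by
  funext x; unfold Mf; simp only [neg_K, neg_V]
  rw [show deriv (fun x => -Kf φ x) x = -deriv (Kf φ) x from deriv.neg, neg_div]

lemma neg_W (φ : ℝ → ℝ) : Wf (fun x => -φ x) = fun x => -Wf φ x := by
  funext x; unfold Wf; simp only [neg_P]; ring

lemma neg_pro (φ : ℝ → ℝ) (hpro : ∀ x, deriv (Mf φ) x = -(Wf φ x)/4) :
    ∀ x, deriv (Mf (fun y => -φ y)) x = -(Wf (fun y => -φ y) x)/4 := by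
  intro x
  simp only [neg_M, neg_W]
  rw [show deriv (fun x => -Mf φ x) x = -deriv (Mf φ) x from deriv.neg, hpro x]
  ring

lemma refl_P (φ : ℝ → ℝ) : deriv (fun x => φ (-x)) = fun x => -deriv φ (-x) :=
  funext fun x => deriv_comp_neg φ x

lemma refl_Q (φ : ℝ → ℝ) :
    deriv (deriv (fun x => φ (-x))) = fun x => deriv (deriv φ) (-x) := by
  rw [refl_P]; funext x
  rw [show deriv (fun x => -deriv φ (-x)) x = -deriv (fun x => deriv φ (-x)) x from deriv.neg,
    deriv_comp_neg (deriv φ) x, neg_neg]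

lemma refl_V (φ : ℝ → ℝ) : Vf (fun x => φ (-x)) = fun x => Vf φ (-x) := by
  funext x; unfold Vf; simp only [refl_P, neg_sq]

lemma refl_K (φ : ℝ → ℝ) : Kf (fun x => φ (-x)) = fun x => Kf φ (-x) := by
  funext x; unfold Kf; simp only [refl_Q, refl_V]

lemma refl_K' (φ : ℝ → ℝ) :
    deriv (Kf (fun x => φ (-x))) = fun x => -deriv (Kf φ) (-x) := by
  rw [refl_K]; exact funext fun x => deriv_comp_neg (Kf φ) x

lemma refl_M (φ : ℝ → ℝ) : Mf (fun x => φ (-x)) = fun x => -Mf φ (-x) := by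
  funext x; unfold Mf; simp only [refl_K', refl_V, neg_div]

lemma refl_W (φ : ℝ → ℝ) : Wf (fun x => φ (-x)) = fun x => Wf φ (-x) := by
  funext x; unfold Wf; simp only [refl_P]; ring

lemma refl_pro (φ : ℝ → ℝ) (hpro : ∀ x, deriv (Mf φ) x = -(Wf φ x)/4) :
    ∀ x, deriv (Mf (fun y => φ (-y))) x = -(Wf (fun y => φ (-y)) x)/4 := by
  intro x
  simp only [refl_M, refl_W]
  rw [show deriv (fun x => -Mf φ (-x)) x = -deriv (fun x => Mf φ (-x)) x from deriv.neg,
    deriv_comp_neg (Mf φ) x, hpro (-x)]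
  ring

lemma refl_smooth {φ : ℝ → ℝ} (hφ : ContDiff ℝ (⊤:ℕ∞) φ) :
    ContDiff ℝ (⊤:ℕ∞) (fun x => φ (-x)) :=
  hφ.comp contDiff_id.neg

end Transport

section Gronwall

variable {φ : ℝ → ℝ}

lemma gron (hφ : ContDiff ℝ (⊤:ℕ∞) φ) (hpro : ∀ x, deriv (Mf φ) x = -(Wf φ x)/4)
    (hK0 : Kf φ 0 = 0) (hM0 : Mf φ 0 = 0) (hW0 : Wf φ 0 = 0) :
    ∀ x, 0 ≤ x → Kf φ x = 0 := by
  have hcont : Continuous (fun z => Vf φ z + 1 + |z| * Vf φ z ^ 3) :=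
    ((contDiff_V hφ).continuous.add continuous_const).add
      (continuous_abs.mul ((contDiff_V hφ).continuous.pow 3))
  intro R hR
  rcases eq_or_lt_of_le hR with h | hRpos
  · rw [← h]; exact hK0
  obtain ⟨C, hCmax⟩ : ∃ C : ℝ, ∀ z ∈ Icc 0 R, Vf φ z + 1 + |z| * Vf φ z ^ 3 ≤ C := by
    obtain ⟨zC, _, hCmax'⟩ := isCompact_Icc.exists_isMaxOn
      ⟨0, left_mem_Icc.mpr hR⟩ hcont.continuousOn
    exact ⟨Vf φ zC + 1 + |zC| * Vf φ zC ^ 3, fun z hz => hCmax' hz⟩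
  have hq' : ∀ z, HasDerivAt (fun y => Kf φ y ^ 2 + Mf φ y ^ 2 + Wf φ y ^ 2)
      (2 * Kf φ z ^ 1 * (Mf φ z * Vf φ z) + 2 * Mf φ z ^ 1 * (-(Wf φ z)/4)
        + 2 * Wf φ z ^ 1 * (-(z * (Kf φ z * Vf φ z ^ 3)))) z := fun z =>
    (((hasDerivAt_K hφ z).pow 2).add ((hasDerivAt_M hφ hpro z).pow 2)).add
      ((hasDerivAt_W hφ z).pow 2)
  have hh' : ∀ z, HasDerivAt (fun y => Real.exp (-(C * y)))
      (Real.exp (-(C * z)) * (-(C * 1))) z := fun z =>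
    (((hasDerivAt_id' z).const_mul C).neg).exp
  have hanti : AntitoneOn
      (fun y => (Kf φ y ^ 2 + Mf φ y ^ 2 + Wf φ y ^ 2) * Real.exp (-(C * y)))
      (Icc 0 R) := by
    refine antitoneOn_of_deriv_nonpos (convex_Icc _ _) ?_ ?_ ?_
    · exact (((((contDiff_K hφ).continuous.pow 2).add
        ((contDiff_M hφ).continuous.pow 2)).add
          ((contDiff_W hφ).continuous.pow 2)).mul
        (Real.continuous_exp.comp ((continuous_const.mul continuous_id).neg))).continuousOn
    · intro z hz
      exact (((hq' z).mul (hh' z)).differentiableAt).differentiableWithinAt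
    · intro z hz
      rw [interior_Icc] at hz
      rw [HasDerivAt.deriv (f := fun y => (Kf φ y ^ 2 + Mf φ y ^ 2 + Wf φ y ^ 2) * Real.exp (-(C * y))) ((hq' z).mul (hh' z))]
      simp only [pow_one]
      have hCz := hCmax z ⟨hz.1.le, hz.2.le⟩
      have habs : |z| = z := abs_of_pos hz.1
      rw [habs] at hCz
      have hV := Vf_pos φ z
      have hV3 : (0:ℝ) < Vf φ z ^ 3 := pow_pos hV 3
      have hzpos := hz.1
      set K := Kf φ z
      set M := Mf φ z
      set W := Wf φ z
      set V := Vf φ z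
      have he : 0 < Real.exp (-(C * z)) := Real.exp_pos _
      have h1 : 2 * K * (M * V) ≤ V * (K^2 + M^2) := by
        nlinarith [mul_nonneg hV.le (sq_nonneg (K - M))]
      have h2 : 2 * M * (-W/4) ≤ (M^2 + W^2)/4 := by
        nlinarith [sq_nonneg (M + W)]
      have h3 : 2 * W * (-(z * (K * V^3))) ≤ z * V^3 * (K^2 + W^2) := by
        nlinarith [mul_nonneg (mul_nonneg hzpos.le hV3.le) (sq_nonneg (K + W))]
      have hq0 : (0:ℝ) ≤ K^2 + M^2 + W^2 := by positivity
      have h5 : V * (K^2 + M^2) + (M^2 + W^2)/4 + z * V^3 * (K^2 + W^2)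
          ≤ (V + 1 + z * V^3) * (K^2 + M^2 + W^2) := by
        have hzV : (0:ℝ) ≤ z * V^3 := mul_nonneg hzpos.le hV3.le
        nlinarith [mul_nonneg hV.le (sq_nonneg W), mul_nonneg hzV (sq_nonneg M),
          mul_nonneg hzV (sq_nonneg K), mul_nonneg hzV (sq_nonneg W),
          sq_nonneg K, sq_nonneg M, sq_nonneg W]
      have h6 : (V + 1 + z * V^3) * (K^2 + M^2 + W^2) ≤ C * (K^2 + M^2 + W^2) :=
        mul_le_mul_of_nonneg_right hCz hq0
      have hA : 2*K*(M*V) + 2*M*(-W/4) + 2*W*(-(z * (K * V^3))) ≤ C * (K^2+M^2+W^2) := by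
        linarith
      have hfinal : (2*K*(M*V) + 2*M*(-W/4) + 2*W*(-(z * (K * V^3)))
          - C*(K^2+M^2+W^2)) * Real.exp (-(C*z)) ≤ 0 :=
        mul_nonpos_iff.mpr (Or.inr ⟨by linarith, he.le⟩)
      nlinarith [hfinal]
  have h0m : (0:ℝ) ∈ Icc 0 R := left_mem_Icc.mpr hR
  have hRm : R ∈ Icc 0 R := right_mem_Icc.mpr hR
  have hfin := hanti h0m hRm hR
  simp only at hfin
  rw [hK0, hM0, hW0] at hfin
  norm_num at hfin
  have he := Real.exp_pos (-(C * R))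
  have hqR : Kf φ R ^ 2 + Mf φ R ^ 2 + Wf φ R ^ 2 ≤ 0 := by
    by_contra hcon
    push_neg at hcon
    nlinarith [mul_pos hcon he]
  have hsq : Kf φ R ^ 2 = 0 := by
    nlinarith [sq_nonneg (Kf φ R), sq_nonneg (Mf φ R), sq_nonneg (Wf φ R)]
  exact (pow_eq_zero_iff two_ne_zero).mp hsq

end Gronwall

end SD

/-- If a graph-like forward self-similar profile `φ` satisfies `φ(0) = 0`,
then `φ` is linear through the origin. -/
theorem stmt_11 (φ v k : ℝ → ℝ) (hφ : ContDiff ℝ (⊤ : ℕ∞) φ)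
    (hv : ∀ x, v x = Real.sqrt (1 + deriv φ x ^ 2))
    (hk : ∀ x, k x = deriv (deriv φ) x / v x ^ 3)
    (hprofile : ∀ x : ℝ,
      (φ x - x * deriv φ x) / 4 = -deriv (fun t => deriv k t / v t) x)
    (h0 : φ 0 = 0) :
    ∃ c : ℝ, ∀ x₁ : ℝ, φ x₁ = c * x₁ := by
  classical
  have hphi : ContDiff ℝ (⊤:ℕ∞) φ := hφ.of_le (by simp)
  have hveq : v = SD.Vf φ := funext fun x => by rw [hv x]; rfl
  have hkeq : k = SD.Kf φ := funext fun x => by rw [hk x, hveq]; rfl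
  have hpro : ∀ x, deriv (SD.Mf φ) x = -(SD.Wf φ x)/4 := by
    intro x
    have h2 : SD.Wf φ x / 4 = -(deriv (SD.Mf φ) x) := by
      have h3 := hprofile x
      rw [hveq, hkeq] at h3
      exact h3
    linarith
  have hW0 : SD.Wf φ 0 = 0 := by simp [SD.Wf, h0]
  -- transported facts for ψ₂ := fun y => φ (-y)
  have hsm2 : ContDiff ℝ (⊤:ℕ∞) (fun y => φ (-y)) := SD.refl_smooth hphi
  have hpro2 : ∀ x, deriv (SD.Mf (fun y => φ (-y))) x = -(SD.Wf (fun y => φ (-y)) x)/4 :=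
    SD.refl_pro φ hpro
  have hW2 : SD.Wf (fun y => φ (-y)) 0 = 0 := by
    rw [congrFun (SD.refl_W φ) 0, neg_zero]; exact hW0
  have hK2 : SD.Kf (fun y => φ (-y)) 0 = SD.Kf φ 0 := by
    rw [congrFun (SD.refl_K φ) 0, neg_zero]
  have hM2 : SD.Mf (fun y => φ (-y)) 0 = -SD.Mf φ 0 := by
    rw [congrFun (SD.refl_M φ) 0, neg_zero]
  -- quadrant elimination
  have hKM : SD.Kf φ 0 = 0 ∧ SD.Mf φ 0 = 0 := by
    rcases le_or_gt 0 (SD.Kf φ 0) with hk0 | hk0 <;> rcases le_or_gt 0 (SD.Mf φ 0) with hm0 | hm0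
    · by_contra hc
      have hne : SD.Kf φ 0 ≠ 0 ∨ SD.Mf φ 0 ≠ 0 := by
        by_contra hd; push_neg at hd; exact hc ⟨hd.1, hd.2⟩
      exact SD.forward hphi hpro hW0 hk0 hm0 hne
    · -- 0 ≤ K0, M0 < 0 : use ψ₂
      exfalso
      refine SD.forward hsm2 hpro2 hW2 ?_ ?_ ?_
      · rw [hK2]; exact hk0
      · rw [hM2]; linarith
      · right; rw [hM2]; exact neg_ne_zero.mpr hm0.ne
    · -- K0 < 0, 0 ≤ M0 : use ψ₃ := fun y => -φ (-y)
      exfalso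
      have hsm3 : ContDiff ℝ (⊤:ℕ∞) (fun y => -φ (-y)) := hsm2.neg
      have hpro3 : ∀ x, deriv (SD.Mf (fun y => -φ (-y))) x
          = -(SD.Wf (fun y => -φ (-y)) x)/4 := SD.neg_pro (fun y => φ (-y)) hpro2
      have hW3 : SD.Wf (fun y => -φ (-y)) 0 = 0 := by
        have h1 : SD.Wf (fun y => -φ (-y)) 0 = -SD.Wf (fun y => φ (-y)) 0 :=
          congrFun (SD.neg_W (fun y => φ (-y))) 0
        rw [h1, hW2, neg_zero]
      have hK3 : SD.Kf (fun y => -φ (-y)) 0 = -SD.Kf φ 0 := by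
        have h1 : SD.Kf (fun y => -φ (-y)) 0 = -SD.Kf (fun y => φ (-y)) 0 :=
          congrFun (SD.neg_K (fun y => φ (-y))) 0
        rw [h1, hK2]
      have hM3 : SD.Mf (fun y => -φ (-y)) 0 = SD.Mf φ 0 := by
        have h1 : SD.Mf (fun y => -φ (-y)) 0 = -SD.Mf (fun y => φ (-y)) 0 :=
          congrFun (SD.neg_M (fun y => φ (-y))) 0
        rw [h1, hM2, neg_neg]
      refine SD.forward hsm3 hpro3 hW3 ?_ ?_ ?_
      · rw [hK3]; linarith
      · rw [hM3]; exact hm0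
      · left; rw [hK3]; exact neg_ne_zero.mpr hk0.ne
    · -- K0 < 0, M0 < 0 : use ψ₁ := fun y => -φ y
      exfalso
      have hsm1 : ContDiff ℝ (⊤:ℕ∞) (fun y => -φ y) := hphi.neg
      have hpro1 : ∀ x, deriv (SD.Mf (fun y => -φ y)) x
          = -(SD.Wf (fun y => -φ y) x)/4 := SD.neg_pro φ hpro
      have hW1 : SD.Wf (fun y => -φ y) 0 = 0 := by
        rw [congrFun (SD.neg_W φ) 0, hW0, neg_zero]
      refine SD.forward hsm1 hpro1 hW1 ?_ ?_ ?_
      · rw [congrFun (SD.neg_K φ) 0]; linarith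
      · rw [congrFun (SD.neg_M φ) 0]; linarith
      · left; rw [congrFun (SD.neg_K φ) 0]; exact neg_ne_zero.mpr hk0.ne
  -- Gronwall: K ≡ 0 hence φ'' ≡ 0
  have hQ0 : ∀ x, deriv (deriv φ) x = 0 := by
    have hgr1 := SD.gron hphi hpro hKM.1 hKM.2 hW0
    have hK2' : SD.Kf (fun y => φ (-y)) 0 = 0 := by rw [hK2]; exact hKM.1
    have hM2' : SD.Mf (fun y => φ (-y)) 0 = 0 := by rw [hM2, hKM.2, neg_zero]
    have hgr2 := SD.gron hsm2 hpro2 hK2' hM2' hW2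
    intro x
    rcases le_or_gt 0 x with hx | hx
    · rw [SD.Q_eq φ x, hgr1 x hx, zero_mul]
    · have h1 := hgr2 (-x) (by linarith)
      rw [congrFun (SD.refl_K φ) (-x), neg_neg] at h1
      rw [SD.Q_eq φ x, h1, zero_mul]
  -- conclude linearity
  have hPdiff : Differentiable ℝ (deriv φ) :=
    (SD.contDiff_P hphi).differentiable SD.one_le_inf
  have hPc : ∀ x, deriv φ x = deriv φ 0 := fun x =>
    is_const_of_deriv_eq_zero hPdiff hQ0 x 0
  refine ⟨deriv φ 0, fun x => ?_⟩
  have hgdiff : Differentiable ℝ (fun y => φ y - deriv φ 0 * y) :=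
    (hphi.differentiable SD.one_le_inf).sub (differentiable_id.const_mul _)
  have hgd : ∀ z, deriv (fun y => φ y - deriv φ 0 * y) z = 0 := by
    intro z
    have h1 : HasDerivAt (fun y => φ y - deriv φ 0 * y) (deriv φ z - deriv φ 0 * 1) z :=
      (((hphi.differentiable SD.one_le_inf) z).hasDerivAt).sub
        ((hasDerivAt_id' z).const_mul _)
    rw [h1.deriv, hPc z]; ring
  have hfin := is_const_of_deriv_eq_zero hgdiff hgd x 0
  rw [h0] at hfin
  linarith
end

section
/- Let φ : ℝ → ℝ be a smooth function satisfying the graph-like forward self-similar profile equation, and define D₀[φ](x₁) := φ(x₁)² + x₁² − ( s(x₁) + |φ(0)| )², where s(x₁) := ∫₀^{x₁} √(1 + φ'(z)²) dz. Then either there exists c ∈ ℝ with φ(x₁) = c·x₁ for all x₁ ∈ ℝ, or limsup_{x₁ → +∞} D₀[φ](x₁) = ∞, or limsup_{x₁ → −∞} D₀[φ](x₁) = ∞. -/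
open Real


lemma lemA (X Y t : ℝ) : X + Y*t ≤ Real.sqrt (X^2+Y^2) * Real.sqrt (1+t^2) := by
  have h1 : X + Y*t ≤ |X + Y*t| := le_abs_self _
  have h2 : |X + Y*t| = Real.sqrt ((X+Y*t)^2) := (Real.sqrt_sq_eq_abs _).symm
  have h3 : Real.sqrt ((X+Y*t)^2) ≤ Real.sqrt ((X^2+Y^2)*(1+t^2)) := by
    apply Real.sqrt_le_sqrt; nlinarith [sq_nonneg (X*t - Y)]
  rw [Real.sqrt_mul (by positivity)] at h3
  linarith

lemma lemB (φ : ℝ → ℝ) (hd : Differentiable ℝ φ) (hc : Continuous (deriv φ))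
    (x : ℝ) (hx : 0 ≤ x) :
    Real.sqrt (x^2 + (φ x - φ 0)^2) ≤ ∫ z in (0:ℝ)..x, Real.sqrt (1 + deriv φ z ^ 2) := by
  set Y := φ x - φ 0 with hY
  set L := Real.sqrt (x^2 + Y^2) with hL
  have hL0 : 0 ≤ L := Real.sqrt_nonneg _
  have hs0 : (0:ℝ) ≤ ∫ z in (0:ℝ)..x, Real.sqrt (1 + deriv φ z ^ 2) :=
    intervalIntegral.integral_nonneg hx (fun z _ => Real.sqrt_nonneg _)
  have hint1 : IntervalIntegrable (fun z => x + Y * deriv φ z) MeasureTheory.volume 0 x :=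
    (continuous_const.add (continuous_const.mul hc)).intervalIntegrable _ _
  have hint2 : IntervalIntegrable (fun z => L * Real.sqrt (1 + deriv φ z ^ 2))
      MeasureTheory.volume 0 x :=
    (continuous_const.mul ((continuous_const.add (hc.pow 2)).sqrt)).intervalIntegrable _ _
  have hcalc : (∫ z in (0:ℝ)..x, (x + Y * deriv φ z)) = x*x + Y*Y := by
    rw [intervalIntegral.integral_add (f := fun _ => x) (g := fun z => Y * deriv φ z) (intervalIntegrable_const)
        ((continuous_const.mul hc : Continuous (fun z => Y * deriv φ z)).intervalIntegrable _ _),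
      intervalIntegral.integral_const, intervalIntegral.integral_const_mul,
      intervalIntegral.integral_deriv_eq_sub (fun z _ => hd z)
        (hc.intervalIntegrable _ _)]
    simp [hY]
  have hmono : (∫ z in (0:ℝ)..x, (x + Y * deriv φ z)) ≤
      ∫ z in (0:ℝ)..x, L * Real.sqrt (1 + deriv φ z ^ 2) := by
    apply intervalIntegral.integral_mono_on hx hint1 hint2
    intro z _; exact lemA x Y (deriv φ z)
  rw [hcalc, intervalIntegral.integral_const_mul] at hmono
  have hLsq : L * L = x*x + Y*Y := by
    have := Real.mul_self_sqrt (by positivity : (0:ℝ) ≤ x^2 + Y^2)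
    rw [← hL] at this; nlinarith [this]
  rcases eq_or_lt_of_le hL0 with h | h
  · linarith
  · have := hmono; rw [← hLsq] at this
    exact le_of_mul_le_mul_left this h

-- triangle: sqrt(x²+φx²) ≤ sqrt(x²+(φx−φ0)²) + |φ0|
lemma lemC (x p p0 : ℝ) :
    Real.sqrt (x^2 + p^2) ≤ Real.sqrt (x^2 + (p - p0)^2) + |p0| := by
  set L := Real.sqrt (x^2 + (p-p0)^2) with hL
  have hL0 : 0 ≤ L := Real.sqrt_nonneg _
  have hLsq : L^2 = x^2 + (p-p0)^2 := Real.sq_sqrt (by positivity)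
  have habs : |p - p0| ≤ L := by
    rw [← Real.sqrt_sq_eq_abs]; apply Real.sqrt_le_sqrt; nlinarith [sq_nonneg x]
  have key : x^2 + p^2 ≤ (L + |p0|)^2 := by
    have h1 : p0 * (p - p0) ≤ |p0| * |p - p0| := by
      calc p0 * (p - p0) ≤ |p0 * (p - p0)| := le_abs_self _
        _ = |p0| * |p - p0| := abs_mul _ _
    have h2 : |p0| * |p - p0| ≤ |p0| * L := by
      apply mul_le_mul_of_nonneg_left habs (abs_nonneg _)
    have hsq : p0^2 = |p0|^2 := (sq_abs p0).symm
    nlinarith [abs_nonneg p0]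
  calc Real.sqrt (x^2 + p^2) ≤ Real.sqrt ((L + |p0|)^2) := Real.sqrt_le_sqrt key
    _ = L + |p0| := Real.sqrt_sq (by positivity)

lemma spiral (φ K : ℝ → ℝ) (hKc : Continuous K) (hφc : Continuous (deriv φ))
    (hder : ∀ x : ℝ, HasDerivAt (fun y => Real.arctan (deriv φ y))
      (K x * Real.sqrt (1 + deriv φ x ^ 2)) x)
    (l u : ℝ) (hlu : l ≤ u) (hk2 : ∀ x ∈ Set.Icc l u, 1 ≤ K x ^ 2) :
    u - l ≤ Real.pi := by
  set V := fun x => Real.sqrt (1 + deriv φ x ^ 2) with hV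
  have hVc : Continuous V := (continuous_const.add (hφc.pow 2)).sqrt
  have hV1 : ∀ x, 1 ≤ V x := by
    intro x
    rw [show (1:ℝ) = Real.sqrt 1 by simp]
    exact Real.sqrt_le_sqrt (by nlinarith [sq_nonneg (deriv φ x)])
  have hKne : ∀ x ∈ Set.Icc l u, K x ≠ 0 := by
    intro x hx h0
    have := hk2 x hx; rw [h0] at this; norm_num at this
  have hint : IntervalIntegrable (fun x => K x * V x) MeasureTheory.volume l u :=
    (hKc.mul hVc).intervalIntegrable _ _
  have hFTC : (∫ x in l..u, K x * V x)
      = Real.arctan (deriv φ u) - Real.arctan (deriv φ l) :=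
    intervalIntegral.integral_eq_sub_of_hasDerivAt (fun x _ => hder x) hint
  have hb1 : Real.arctan (deriv φ u) - Real.arctan (deriv φ l) < Real.pi := by
    have := Real.arctan_lt_pi_div_two (deriv φ u)
    have := Real.neg_pi_div_two_lt_arctan (deriv φ l)
    linarith
  have hb2 : -Real.pi < Real.arctan (deriv φ u) - Real.arctan (deriv φ l) := by
    have := Real.arctan_lt_pi_div_two (deriv φ l)
    have := Real.neg_pi_div_two_lt_arctan (deriv φ u)
    linarith
  rcases lt_or_gt_of_ne (hKne l ⟨le_refl l, hlu⟩) with hneg | hpos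
  · -- K < 0 on [l,u]
    have hall : ∀ x ∈ Set.Icc l u, K x ≤ -1 := by
      intro x hx
      have hxneg : K x < 0 := by
        by_contra hcon
        push_neg at hcon
        have hxpos : 0 < K x := lt_of_le_of_ne hcon (Ne.symm (hKne x hx))
        have hsub : Set.Icc (K l) (K x) ⊆ K '' Set.Icc l x :=
          intermediate_value_Icc hx.1 (hKc.continuousOn)
        obtain ⟨z, hz, hz0⟩ := hsub ⟨le_of_lt hneg, le_of_lt hxpos⟩
        exact hKne z ⟨hz.1, le_trans hz.2 hx.2⟩ hz0
      nlinarith [hk2 x hx]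
    have hptw : ∀ x ∈ Set.Icc l u, K x * V x ≤ -1 := by
      intro x hx
      have h1 := hall x hx
      have h2 := hV1 x
      nlinarith
    have : (∫ x in l..u, K x * V x) ≤ ∫ x in l..u, (-1:ℝ) := by
      apply intervalIntegral.integral_mono_on hlu hint
        (intervalIntegrable_const) hptw
    rw [hFTC, intervalIntegral.integral_const] at this
    simp at this
    linarith
  · -- K > 0 on [l,u]
    have hall : ∀ x ∈ Set.Icc l u, 1 ≤ K x := by
      intro x hx
      have hxpos : 0 < K x := by
        by_contra hcon
        push_neg at hcon
        have hxneg : K x < 0 := lt_of_le_of_ne hcon (hKne x hx)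
        have hsub : Set.Icc (K x) (K l) ⊆ K '' Set.Icc l x :=
          intermediate_value_Icc' hx.1 (hKc.continuousOn)
        obtain ⟨z, hz, hz0⟩ := hsub ⟨le_of_lt hxneg, le_of_lt hpos⟩
        exact hKne z ⟨hz.1, le_trans hz.2 hx.2⟩ hz0
      nlinarith [hk2 x hx]
    have hptw : ∀ x ∈ Set.Icc l u, (1:ℝ) ≤ K x * V x := by
      intro x hx
      have h1 := hall x hx
      have h2 := hV1 x
      nlinarith
    have : (∫ x in l..u, (1:ℝ)) ≤ ∫ x in l..u, K x * V x := by
      apply intervalIntegral.integral_mono_on hlu (intervalIntegrable_const) hint hptw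
    rw [hFTC, intervalIntegral.integral_const] at this
    simp at this
    linarith

set_option maxHeartbeats 2000000 in
/-- For a graph-like forward self-similar profile `φ`, with
`D₀[φ](x₁) = φ(x₁)² + x₁² - (s(x₁) + |φ(0)|)²`, either `φ` is linear through the
origin, or `limsup_{x₁→+∞} D₀[φ] = ∞`, or `limsup_{x₁→-∞} D₀[φ] = ∞`. -/
theorem stmt_12 (φ v k s : ℝ → ℝ) (hφ : ContDiff ℝ (⊤ : ℕ∞) φ)
    (hv : ∀ x, v x = Real.sqrt (1 + deriv φ x ^ 2))
    (hk : ∀ x, k x = deriv (deriv φ) x / v x ^ 3)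
    (hs : ∀ x₁, s x₁ = ∫ z in (0:ℝ)..x₁, Real.sqrt (1 + deriv φ z ^ 2))
    (hprofile : ∀ x : ℝ,
      (φ x - x * deriv φ x) / 4 = -deriv (fun t => deriv k t / v t) x)
    (D₀ : ℝ → ℝ)
    (hD₀ : ∀ x₁, D₀ x₁ = φ x₁ ^ 2 + x₁ ^ 2 - (s x₁ + |φ 0|) ^ 2) :
    (∃ c : ℝ, ∀ x₁ : ℝ, φ x₁ = c * x₁) ∨
      (∀ M : ℝ, ∃ᶠ x₁ in Filter.atTop, M < D₀ x₁) ∨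
      (∀ M : ℝ, ∃ᶠ x₁ in Filter.atBot, M < D₀ x₁) := by
  -- smoothness basics
  have hφi : ContDiff ℝ ((⊤:ℕ∞) : WithTop ℕ∞) φ := hφ.of_le (by simp)
  have hφd : Differentiable ℝ φ := hφi.differentiable (by simp)
  have hφ' : ContDiff ℝ ((⊤:ℕ∞) : WithTop ℕ∞) (deriv φ) :=
    (contDiff_infty_iff_deriv.mp hφi).2
  have hφ'd : Differentiable ℝ (deriv φ) := hφ'.differentiable (by simp)
  have hφ'c : Continuous (deriv φ) := hφ'd.continuous
  have hφ'' : ContDiff ℝ ((⊤:ℕ∞) : WithTop ℕ∞) (deriv (deriv φ)) :=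
    (contDiff_infty_iff_deriv.mp hφ').2
  have hφ''d : Differentiable ℝ (deriv (deriv φ)) := hφ''.differentiable (by simp)
  have hφ''c : Continuous (deriv (deriv φ)) := hφ''d.continuous
  -- replace abstract functions by explicit ones
  have hveq : v = fun x => Real.sqrt (1 + deriv φ x ^ 2) := funext hv
  subst hveq
  have hkeq : k = fun x => deriv (deriv φ) x /
      (fun x => Real.sqrt (1 + deriv φ x ^ 2)) x ^ 3 := funext hk
  subst hkeq
  have hseq : s = fun x₁ => ∫ z in (0:ℝ)..x₁, Real.sqrt (1 + deriv φ z ^ 2) := funext hs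
  subst hseq
  have hDeq : D₀ = fun x₁ => φ x₁ ^ 2 + x₁ ^ 2 -
      ((fun x₁ => ∫ z in (0:ℝ)..x₁, Real.sqrt (1 + deriv φ z ^ 2)) x₁ + |φ 0|) ^ 2 :=
    funext hD₀
  subst hDeq
  beta_reduce at hprofile ⊢
  set V : ℝ → ℝ := fun x => Real.sqrt (1 + deriv φ x ^ 2) with hVdef
  set K : ℝ → ℝ := fun x => deriv (deriv φ) x / V x ^ 3 with hKdef
  set S : ℝ → ℝ := fun x₁ => ∫ z in (0:ℝ)..x₁, Real.sqrt (1 + deriv φ z ^ 2) with hSdef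
  set a : ℝ := |φ 0| with hadef
  -- basic facts about V
  have hVpos : ∀ x, 0 < V x := fun x => Real.sqrt_pos.mpr (by positivity)
  have hVne : ∀ x, V x ≠ 0 := fun x => ne_of_gt (hVpos x)
  have hVsq : ∀ x, V x ^ 2 = 1 + deriv φ x ^ 2 := fun x => Real.sq_sqrt (by positivity)
  have hV1 : ∀ x, 1 ≤ V x := by
    intro x
    rw [show (1:ℝ) = Real.sqrt 1 by simp]
    exact Real.sqrt_le_sqrt (by nlinarith [sq_nonneg (deriv φ x)])
  have hVS : ContDiff ℝ ((⊤:ℕ∞) : WithTop ℕ∞) V :=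
    (contDiff_const.add (hφ'.pow 2)).sqrt (fun x => by positivity)
  have hVc : Continuous V := hVS.continuous
  have hVd : ∀ x, HasDerivAt V (deriv φ x * deriv (deriv φ) x / V x) x := by
    intro x
    have hin : HasDerivAt (fun y => 1 + deriv φ y ^ 2)
        (2 * deriv φ x ^ 1 * deriv (deriv φ) x) x :=
      (((hφ'd x).hasDerivAt).pow 2).const_add 1
    have := (Real.hasDerivAt_sqrt (by positivity : (1:ℝ) + deriv φ x ^ 2 ≠ 0)).comp x hin
    refine this.congr_deriv (Eq.symm ?_)
    rw [hVdef]
    field_simp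
  -- facts about K
  have hKS : ContDiff ℝ ((⊤:ℕ∞) : WithTop ℕ∞) K :=
    hφ''.div (hVS.pow 3) (fun x => by positivity)
  have hKc : Continuous K := hKS.continuous
  have hKd : Differentiable ℝ K := hKS.differentiable (by simp)
  have hK' : ContDiff ℝ ((⊤:ℕ∞) : WithTop ℕ∞) (deriv K) := (contDiff_infty_iff_deriv.mp hKS).2
  have hK'd : Differentiable ℝ (deriv K) := hK'.differentiable (by simp)
  have hK'c : Continuous (deriv K) := hK'd.continuous
  -- derivative of S
  have hSd : ∀ x, HasDerivAt S (V x) x := by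
    intro x
    exact intervalIntegral.integral_hasDerivAt_right
      ((hVc.intervalIntegrable) 0 x)
      (hVc.stronglyMeasurableAtFilter _ _)
      (hVc.continuousAt)
  -- derivative of the profile quantity
  have hHd : ∀ x, HasDerivAt (fun t => deriv K t / V t) (-((φ x - x * deriv φ x)/4)) x := by
    intro x
    have hdiff : DifferentiableAt ℝ (fun t => deriv K t / V t) x :=
      (hK'd x).div (hVd x).differentiableAt (hVne x)
    have h1 := hdiff.hasDerivAt
    rw [show deriv (fun t => deriv K t / V t) x = -((φ x - x * deriv φ x)/4) from by
      linarith [hprofile x]] at h1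
    exact h1
  -- P and its derivative
  set P : ℝ → ℝ := fun x => 2 * ((x + φ x * deriv φ x) / V x) - 2 * (S x + a) with hPdef
  have hPd : ∀ x, HasDerivAt P
      (2 * deriv (deriv φ) x * (φ x - x * deriv φ x) / V x ^ 3) x := by
    intro x
    have hN : HasDerivAt (fun y => y + φ y * deriv φ y)
        (1 + (deriv φ x * deriv φ x + φ x * deriv (deriv φ) x)) x :=
      (hasDerivAt_id x).add (((hφd x).hasDerivAt).mul ((hφ'd x).hasDerivAt))
    have hq := hN.div (hVd x) (hVne x)
    have hP1 := (hq.const_mul 2).sub (((hSd x).add_const a).const_mul 2)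
    refine hP1.congr_deriv (Eq.symm ?_)
    have h2 := hVsq x
    have h3 := hVne x
    field_simp
    linear_combination (V x ^ 2 - φ x * deriv (deriv φ) x) * hVsq x
  -- E and its derivative
  set E : ℝ → ℝ := fun x => P x + 8 * (K x * (deriv K x / V x)) with hEdef
  have hEd : ∀ x, HasDerivAt E (8 * deriv K x ^ 2 / V x) x := by
    intro x
    have h1 := (hPd x).add ((((hKd x).hasDerivAt).mul (hHd x)).const_mul 8)
    refine h1.congr_deriv (Eq.symm ?_)
    have h3 := hVne x
    show 8 * deriv K x ^ 2 / V x = 2 * deriv (deriv φ) x * (φ x - x * deriv φ x) / V x ^ 3 +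
      8 * (deriv K x * (deriv K x / V x) +
        (deriv (deriv φ) x / V x ^ 3) * -((φ x - x * deriv φ x) / 4))
    field_simp
    ring
  have hEdiff : Differentiable ℝ E := fun x => (hEd x).differentiableAt
  have hEmono : Monotone E := by
    apply monotone_of_deriv_nonneg hEdiff
    intro x
    rw [(hEd x).deriv]
    positivity
  -- arctan derivative
  have harctan : ∀ x, HasDerivAt (fun y => Real.arctan (deriv φ y)) (K x * V x) x := by
    intro x
    have h1 := (Real.hasDerivAt_arctan (deriv φ x)).comp x ((hφ'd x).hasDerivAt)
    refine h1.congr_deriv (Eq.symm ?_)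
    show K x * V x = 1 / (1 + deriv φ x ^ 2) * deriv (deriv φ) x
    rw [← hVsq x]
    have h3 := hVne x
    show deriv (deriv φ) x / V x ^ 3 * V x = 1 / V x ^ 2 * deriv (deriv φ) x
    field_simp
  -- P is nonpositive on the right half line
  have hPneg : ∀ x, 0 ≤ x → P x ≤ 0 := by
    intro x hx
    have h1 : x + φ x * deriv φ x ≤ Real.sqrt (x^2 + φ x^2) * V x := lemA x (φ x) (deriv φ x)
    have h2 : Real.sqrt (x^2 + φ x^2) ≤ S x + a := by
      refine le_trans (lemC x (φ x) (φ 0)) ?_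
      exact add_le_add_left (lemB φ hφd hφ'c x hx) _
    have h3 : (x + φ x * deriv φ x)/V x ≤ Real.sqrt (x^2 + φ x^2) := by
      rw [div_le_iff₀ (hVpos x)]; exact h1
    show (fun x => 2 * ((x + φ x * deriv φ x) / V x) - 2 * (S x + a)) x ≤ 0
    beta_reduce
    linarith
  -- identities relating E, P, K before making them opaque
  have hPxid : ∀ x, P x = 2 * ((x + φ x * deriv φ x) / V x) - 2 * (S x + a) := fun x => rfl
  have hExid : ∀ x, E x = P x + 8 * (K x * (deriv K x / V x)) := fun x => rfl
  have hEPid : ∀ x, 8 * (K x * deriv K x) = (E x - P x) * V x := by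
    intro x
    rw [hExid x]
    have h3 := hVne x
    field_simp
    ring
  have hEVid : ∀ x, E x * V x =
      (2 * (x + φ x * deriv φ x) - 2 * (S x + a) * V x) + 8 * (K x * deriv K x) := by
    intro x
    rw [hExid x, hPxid x]
    have h3 := hVne x
    field_simp
  clear_value V K S P E
  have harctan' : ∀ x, HasDerivAt (fun y => Real.arctan (deriv φ y))
      (K x * Real.sqrt (1 + deriv φ x ^ 2)) x := fun x => (hv x) ▸ harctan x
  -- E is nonpositive everywhere
  have hEneg : ∀ x, E x ≤ 0 := by
    intro x₁
    by_contra hcon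
    push_neg at hcon
    obtain ⟨δ, hδdef⟩ : ∃ δ, δ = E x₁ := ⟨_, rfl⟩
    have hδ : 0 < δ := by rw [hδdef]; exact hcon
    obtain ⟨b, hbdef⟩ : ∃ b, b = max x₁ 0 := ⟨_, rfl⟩
    have hW : MonotoneOn (fun x => K x ^ 2 - δ/4 * x) (Set.Ici b) := by
      apply monotoneOn_of_deriv_nonneg (convex_Ici b)
      · exact ((hKc.pow 2).sub (continuous_const.mul continuous_id)).continuousOn
      · intro x _
        exact (((hKd x).pow 2).sub ((differentiableAt_id.const_mul _))).differentiableWithinAt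
      · intro x hx
        rw [interior_Ici] at hx
        have hxb : b < x := hx
        have hKK : HasDerivAt (fun x => K x ^ 2 - δ/4 * x)
            (2 * K x ^ 1 * deriv K x - δ/4 * 1) x :=
          (((hKd x).hasDerivAt).pow 2).sub ((hasDerivAt_id x).const_mul (δ/4))
        rw [hKK.deriv]
        have hEx : δ ≤ E x := by
          rw [hδdef]
          exact hEmono (le_trans (hbdef ▸ le_max_left x₁ 0) (le_of_lt hxb))
        have hPx : P x ≤ 0 := hPneg x (le_trans (hbdef ▸ le_max_right x₁ 0) (le_of_lt hxb))
        have hid := hEPid x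
        have hVx := hV1 x
        have hVp := hVpos x
        have h5 : δ ≤ E x - P x := by linarith
        have h6 : δ * 1 ≤ (E x - P x) * V x :=
          mul_le_mul h5 hVx zero_le_one (by linarith)
        rw [pow_one]
        have h9 : δ * 1 ≤ 8 * (K x * deriv K x) := by rw [hid]; exact h6
        nlinarith [h9]
    have hsq : ∀ x, b + 4/δ ≤ x → 1 ≤ K x ^ 2 := by
      intro x hx
      have h4 : (0:ℝ) ≤ 4/δ := by positivity
      have hbx : b ≤ x := by linarith
      have := hW (Set.self_mem_Ici) (Set.mem_Ici.mpr hbx) hbx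
      simp only at this
      have h7 : 4 ≤ δ * (x - b) := by
        have h8 := mul_le_mul_of_nonneg_left (by linarith : 4/δ ≤ x - b) (le_of_lt hδ)
        calc (4:ℝ) = δ * (4/δ) := by field_simp
          _ ≤ δ * (x - b) := h8
      have h10 : δ * (x - b) / 4 ≤ K x ^ 2 - K b ^ 2 := by nlinarith [this]
      nlinarith [sq_nonneg (K b), h7, h10]
    have hsp := spiral φ K hKc hφ'c harctan' (b + 4/δ) (b + 4/δ + Real.pi + 1)
      (by linarith [Real.pi_pos]) (fun x hx => hsq x hx.1)
    linarith [Real.pi_pos]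
  have hSdiff : Differentiable ℝ S := fun x => (hSd x).differentiableAt
  have hSc : Continuous S := hSdiff.continuous
  by_cases hK'0 : ∀ x, deriv K x = 0
  · -- linear case
    left
    have hH0 : (fun t => deriv K t / Real.sqrt (1 + deriv φ t ^ 2)) = fun _ => (0:ℝ) := by
      funext t; rw [hK'0 t]; simp
    have hw : ∀ x, φ x - x * deriv φ x = 0 := by
      intro x
      have h1 := hprofile x
      rw [hH0, deriv_const] at h1
      linarith
    have hwd : ∀ x, HasDerivAt (fun y => φ y - y * deriv φ y)
        (-(x * deriv (deriv φ) x)) x := by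
      intro x
      have h1 := ((hφd x).hasDerivAt).sub ((hasDerivAt_id x).mul ((hφ'd x).hasDerivAt))
      refine h1.congr_deriv (Eq.symm ?_)
      simp only [id_eq]
      ring
    have hzero : (fun y => φ y - y * deriv φ y) = fun _ => (0:ℝ) := funext hw
    have hderiv0 : ∀ x, x * deriv (deriv φ) x = 0 := by
      intro x
      have h3 : deriv (fun y => φ y - y * deriv φ y) x = -(x * deriv (deriv φ) x) :=
        (hwd x).deriv
      rw [hzero, deriv_const] at h3
      linarith
    have hbb : ∀ x, deriv (deriv φ) x = 0 := by
      intro x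
      rcases eq_or_ne x 0 with rfl | hx
      · have ht1 : Filter.Tendsto (deriv (deriv φ)) (nhdsWithin 0 {(0:ℝ)}ᶜ)
            (nhds (deriv (deriv φ) 0)) := (hφ''c.continuousAt).continuousWithinAt
        have ht2 : Filter.Tendsto (deriv (deriv φ)) (nhdsWithin 0 {(0:ℝ)}ᶜ) (nhds 0) := by
          apply Filter.Tendsto.congr' _ tendsto_const_nhds
          filter_upwards [self_mem_nhdsWithin] with y hy
          have h4 := hderiv0 y
          have hy0 : y ≠ 0 := hy
          exact ((mul_eq_zero.mp h4).resolve_left hy0).symm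
        exact tendsto_nhds_unique ht1 ht2
      · exact (mul_eq_zero.mp (hderiv0 x)).resolve_left hx
    have hcst : ∀ x y, deriv φ x = deriv φ y := is_const_of_deriv_eq_zero hφ'd hbb
    refine ⟨deriv φ 0, fun x => ?_⟩
    have hgd : ∀ z, deriv (fun y => φ y - deriv φ 0 * y) z = 0 := by
      intro z
      have h1 : HasDerivAt (fun y => φ y - deriv φ 0 * y) (deriv φ z - deriv φ 0 * 1) z :=
        ((hφd z).hasDerivAt).sub ((hasDerivAt_id z).const_mul (deriv φ 0))
      rw [h1.deriv]
      have := hcst z 0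
      simp [this]
    have hgdiff : Differentiable ℝ (fun y => φ y - deriv φ 0 * y) :=
      hφd.sub ((differentiable_id.const_mul _))
    have h2 := is_const_of_deriv_eq_zero hgdiff hgd x 0
    have hφ0 : φ 0 = 0 := by have := hw 0; simpa using this
    simp only [hφ0] at h2
    simp at h2
    linarith [h2]
  · -- blow-up at -∞
    push_neg at hK'0
    obtain ⟨x₅, hx₅⟩ := hK'0
    right; right
    intro M
    by_contra hnf
    rw [Filter.not_frequently] at hnf
    rw [Filter.eventually_atBot] at hnf
    obtain ⟨x₆, hx₆⟩ := hnf
    have hbound : ∀ x ≤ x₆, φ x ^ 2 + x ^ 2 - (S x + a) ^ 2 ≤ M := by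
      intro x hx
      have h1 := hx₆ x hx
      push_neg at h1
      rw [hs x] at *
      exact h1
    -- strict increase of E across x₅
    have hEstrict : E (x₅ - 1) < E (x₅ + 1) := by
      rcases lt_or_eq_of_le (hEmono (by linarith : x₅ - 1 ≤ x₅ + 1)) with h | h
      · exact h
      · exfalso
        have hconst : ∀ y ∈ Set.Icc (x₅-1) (x₅+1), E y = E (x₅-1) :=
          fun y hy => le_antisymm (h ▸ hEmono hy.2) (hEmono hy.1)
        have hev : E =ᶠ[nhds x₅] fun _ => E (x₅-1) := by
          filter_upwards [Ioo_mem_nhds (by linarith : x₅ - 1 < x₅)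
            (by linarith : x₅ < x₅+1)] with y hy
          exact hconst y ⟨le_of_lt hy.1, le_of_lt hy.2⟩
        have hd0 : deriv E x₅ = 0 := by
          rw [hev.deriv_eq]; exact deriv_const _ _
        rw [(hEd x₅).deriv] at hd0
        have hv5 := hVpos x₅
        have h8 : 0 < 8 * deriv K x₅ ^ 2 / V x₅ := by positivity
        linarith
    obtain ⟨c, hcdef⟩ : ∃ c, c = -(E (x₅ - 1)) := ⟨_, rfl⟩
    have hcpos : 0 < c := by
      have := hEneg (x₅ + 1)
      rw [hcdef]
      linarith
    obtain ⟨F, hFdef⟩ : ∃ F : ℝ → ℝ,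
        F = fun y => φ y ^ 2 + y ^ 2 - (S y + a) ^ 2 + 4 * K y ^ 2 := ⟨_, rfl⟩
    have hFd : ∀ x, HasDerivAt (fun y => F y + c * y)
        ((2 * (x + φ x * deriv φ x) - 2 * (S x + a) * V x + 8 * (K x * deriv K x)) + c) x := by
      intro x
      rw [hFdef]
      have hA : HasDerivAt (fun y => φ y ^ 2) (2 * φ x ^ 1 * deriv φ x) x :=
        ((hφd x).hasDerivAt).pow 2
      have hB : HasDerivAt (fun y : ℝ => y ^ 2) ((2:ℕ) * x ^ 1) x := by
        simpa using hasDerivAt_pow 2 x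
      have hC : HasDerivAt (fun y => (S y + a) ^ 2) (2 * (S x + a) ^ 1 * V x) x :=
        ((hSd x).add_const a).pow 2
      have hD : HasDerivAt (fun y => 4 * K y ^ 2) (4 * (2 * K x ^ 1 * deriv K x)) x :=
        (((hKd x).hasDerivAt).pow 2).const_mul 4
      have hE2 : HasDerivAt (fun y : ℝ => c * y) (c * 1) x :=
        (hasDerivAt_id x).const_mul c
      have h1 : HasDerivAt (fun y => φ y ^ 2 + y ^ 2 - (S y + a) ^ 2 + 4 * K y ^ 2 + c * y)
          (2 * φ x ^ 1 * deriv φ x + (2:ℕ) * x ^ 1 - 2 * (S x + a) ^ 1 * V x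
            + 4 * (2 * K x ^ 1 * deriv K x) + c * 1) x :=
        (((hA.add hB).sub hC).add hD).add hE2
      convert h1 using 1
      push_cast
      ring
    have hkey : ∀ x ∈ interior (Set.Iic (x₅ - 1)),
        deriv (fun y => F y + c * y) x ≤ 0 := by
      intro x hx
      rw [interior_Iic] at hx
      have hxle : x ≤ x₅ - 1 := le_of_lt hx
      rw [(hFd x).deriv]
      have h1 : E x ≤ -c := by
        rw [hcdef]
        have := hEmono hxle
        linarith
      have h2 := hEVid x
      have h3 := hV1 x
      have h4 : E x * V x ≤ -c * V x := mul_le_mul_of_nonneg_right h1 (by linarith)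
      nlinarith [hcpos]
    have hanti : AntitoneOn (fun y => F y + c * y) (Set.Iic (x₅ - 1)) := by
      apply antitoneOn_of_deriv_nonpos (convex_Iic _)
      · rw [hFdef]
        apply Continuous.continuousOn
        exact ((((hφd.continuous.pow 2).add (continuous_id.pow 2)).sub
          ((hSc.add continuous_const).pow 2)).add
          (continuous_const.mul (hKc.pow 2))).add (continuous_const.mul continuous_id)
      · intro x _
        exact ((hFd x).differentiableAt).differentiableWithinAt
      · exact hkey
    -- lower bound for K² far to the left
    obtain ⟨x₇, hx₇def⟩ : ∃ x₇, x₇ = min (min (x₅ - 1) x₆)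
      ((F (x₅ - 1) + c * (x₅ - 1) - M - 4)/c) := ⟨_, rfl⟩
    have hk1 : ∀ x ≤ x₇, 1 ≤ K x ^ 2 := by
      intro x hx
      rw [hx₇def] at hx
      have hxa : x ≤ x₅ - 1 := le_trans hx (le_trans (min_le_left _ _) (min_le_left _ _))
      have hxb : x ≤ x₆ := le_trans hx (le_trans (min_le_left _ _) (min_le_right _ _))
      have hxc : x ≤ (F (x₅ - 1) + c * (x₅ - 1) - M - 4)/c :=
        le_trans hx (min_le_right _ _)
      have h1 : F (x₅ - 1) + c * (x₅ - 1) ≤ F x + c * x :=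
        hanti (Set.mem_Iic.mpr hxa) (Set.mem_Iic.mpr (le_refl _)) hxa
      have h2 := hbound x hxb
      have h3 : c * x ≤ F (x₅ - 1) + c * (x₅ - 1) - M - 4 := by
        have h5 := (le_div_iff₀ hcpos).mp hxc
        linarith
      have h4 : F x = φ x ^ 2 + x ^ 2 - (S x + a) ^ 2 + 4 * K x ^ 2 := by
        rw [hFdef]
      nlinarith [h1, h2, h3, h4]
    have hsp := spiral φ K hKc hφ'c harctan' (x₇ - Real.pi - 1) x₇
      (by linarith [Real.pi_pos]) (fun x hx => hk1 x hx.2)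
    linarith [Real.pi_pos]
end

section
/- Let A ∈ ℝ with A ≠ 0 and ε > 0. Define φ_ε : ℝ → ℝ by φ_ε(y) = A·ε for |y| < ε and φ_ε(y) = A·|y| for |y| ≥ ε, and define g_ε : ℝ → ℝ by g_ε(z) = 0 for |z| < ε, g_ε(z) = A for z ≥ ε and g_ε(z) = −A for z ≤ −ε. Set D[φ_ε](y) := φ_ε(y)² + y² − ( ∫₀^y √(1 + g_ε(z)²) dz )² and c := ε·(√(1 + A²) − 1). Then for every y ≥ ε one has D[φ_ε](y) = 2c·√(1 + A²)·y − c²; in particular D[φ_ε](y) → ∞ as y → ∞, so D[φ_ε] is unbounded on ℝ even though φ_ε converges to the homogeneous function φ_{A,A}(y) = A|y| uniformly as ε ↓ 0. -/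
/-! For `y ≥ ε` the integrand `√(1 + g²)` is the step function equal to `1` below `ε` and to
`s = √(1 + A²)` above it, so the arclength is `s y - c`, while `φ(y)² + y² = s² y²`.
The difference of squares `s² y² - (s y - c)²` is affine in `y` with slope `2 c s > 0`. -/

open Set intervalIntegral Filter

theorem intervalIntegral.integral_ite_lt {E : Type*} [NormedAddCommGroup E] [NormedSpace ℝ E]
    [CompleteSpace E] {a b c : ℝ} (u v : E) (hab : a ≤ b) (hbc : b ≤ c) :
    ∫ x in a..c, (if x < b then u else v) = (b - a) • u + (c - b) • v := by
  have hu : EqOn (fun x => if x < b then u else v) (fun _ => u) (uIoo a b) := by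
    intro x hx
    simp [(uIoo_of_le hab ▸ hx).2]
  have hv : EqOn (fun x => if x < b then u else v) (fun _ => v) (uIoo b c) := by
    intro x hx
    simp [(uIoo_of_le hbc ▸ hx).1.not_gt]
  rw [← integral_add_adjacent_intervals (intervalIntegrable_const.congr_uIoo hu.symm)
    (intervalIntegrable_const.congr_uIoo hv.symm), integral_congr_uIoo hu, integral_congr_uIoo hv,
    integral_const, integral_const]

/-- For `A ≠ 0`, `ε > 0` and the flattened function
`φ_ε(y) = Aε (|y| < ε), A|y| (|y| ≥ ε)` with slope
`g_ε(z) = 0 (|z| < ε), A (z ≥ ε), -A (z ≤ -ε)`, setting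
`c = ε(√(1 + A²) - 1)`, one has
`D[φ_ε](y) = 2 c √(1 + A²) y - c²` for every `y ≥ ε`; in particular
`D[φ_ε](y) → ∞` as `y → ∞`. -/
theorem stmt_15 (A ε : ℝ) (hA : A ≠ 0) (hε : 0 < ε)
    (φ g : ℝ → ℝ)
    (hφ : ∀ y, φ y = if |y| < ε then A * ε else A * |y|)
    (hg : ∀ z, g z = if |z| < ε then 0 else if 0 ≤ z then A else -A)
    (D : ℝ → ℝ)
    (hD : ∀ y, D y = φ y ^ 2 + y ^ 2 - (∫ z in (0:ℝ)..y, Real.sqrt (1 + g z ^ 2)) ^ 2)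
    (c : ℝ) (hc : c = ε * (Real.sqrt (1 + A ^ 2) - 1)) :
    (∀ y : ℝ, ε ≤ y → D y = 2 * c * Real.sqrt (1 + A ^ 2) * y - c ^ 2) ∧
      Filter.Tendsto D Filter.atTop Filter.atTop := by
  set s := Real.sqrt (1 + A ^ 2)
  have hs_sq : s ^ 2 = 1 + A ^ 2 := Real.sq_sqrt (by positivity)
  have hs_gt : 1 < s := Real.lt_sqrt_of_sq_lt (by simpa using pow_pos (abs_pos.2 hA) 2)
  have hc_pos : 0 < c := hc ▸ mul_pos hε (sub_pos.2 hs_gt)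
  have hlength : ∀ y, ε ≤ y → ∫ z in (0:ℝ)..y, Real.sqrt (1 + g z ^ 2) = s * y - c := by
    intro y hy
    have hslope : EqOn (fun z => Real.sqrt (1 + g z ^ 2)) (fun z => if z < ε then 1 else s)
        (uIcc 0 y) := by
      intro z hz
      rw [uIcc_of_le (hε.le.trans hy)] at hz
      simp only [hg, abs_of_nonneg hz.1, hz.1, s]
      split_ifs <;> simp
    rw [integral_congr hslope, integral_ite_lt _ _ hε.le hy, hc]
    simp only [smul_eq_mul]
    ring
  have hformula : ∀ y, ε ≤ y → D y = 2 * c * s * y - c ^ 2 := by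
    intro y hy
    have hy0 : 0 ≤ y := hε.le.trans hy
    rw [hD, hφ, if_neg (by rwa [abs_of_nonneg hy0, not_lt]), abs_of_nonneg hy0, hlength y hy]
    linear_combination y ^ 2 * hs_sq.symm
  refine ⟨hformula, Tendsto.congr' (f₁ := fun y => 2 * c * s * y - c ^ 2) ?_ ?_⟩
  · filter_upwards [eventually_ge_atTop ε] with y hy using (hformula y hy).symm
  · exact tendsto_atTop_add_const_right _ _
      (tendsto_id.const_mul_atTop (by positivity))
end
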